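/- arXiv:1603.06030 — 10 statements merged into one kernel-verified Lean document; each statement's English description precedes it below -/
import Mathlib

section
/- Let r ≥ 1 and n_1, …, n_r > 1 be integers, let R = ℤ_{n_1} ⊕ ⋯ ⊕ ℤ_{n_r}, let S_R be the multiplicative monoid of R, and let U(S_R) = Rˣ be its group of units. Let P_2 = #{i ∈ [1,r] : 2 exactly divides n_i (i.e., 2 ∣ n_i but 4 ∤ n_i)}. Then D(S_R) ≥ D(U(S_R)) + P_2. -/
/-!
Let `W` be a multiset of `D(Rˣ) - 1` units with no nonempty subproduct equal to `1`, and for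
each `i` with `n_i ≡ 2 (mod 4)` let `a_i ∈ R` be `e_i` in coordinate `i` and `1` elsewhere,
where `e_i ∈ ℤ/n_i` corresponds to `(0, 1)` under `ℤ/n_i ≅ ℤ/2 × ℤ/(n_i/2)`. Then `e_i` is not a
unit, but multiplication by it is injective on units because `(ℤ/2)ˣ` is trivial.

The multiset `W + {a_i}` is reduced: a proper submultiset missing some `a_i` has a unit `i`-th
coordinate in its product, while the whole product does not; one containing every `a_i` has,
after cancelling `∏ a_i` against units, the same product of units as `W`, which forces it to
contain all of `W`. A reduced multiset is shorter than `D(S_R)`.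
-/

/-- The Davenport constant of a finite commutative monoid `S`: the least positive
integer `ℓ` such that every multiset of `ℓ` elements of `S` has a proper sub-multiset
(possibly empty) whose product equals the product of the whole multiset. -/
noncomputable def DavenportM (S : Type*) [CommMonoid S] : ℕ :=
  sInf {ℓ : ℕ | 0 < ℓ ∧ ∀ T : Multiset S, Multiset.card T = ℓ →
    ∃ T' : Multiset S, T' < T ∧ T'.prod = T.prod}

/-- The Davenport constant of a finite abelian group `G`: the least positive integer `ℓ`
such that every multiset of `ℓ` elements of `G` has a nonempty sub-multiset with
product equal to the identity. -/
noncomputable def DavenportG (G : Type*) [CommGroup G] : ℕ :=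
  sInf {ℓ : ℕ | 0 < ℓ ∧ ∀ T : Multiset G, Multiset.card T = ℓ →
    ∃ T' : Multiset G, T' ≤ T ∧ T' ≠ 0 ∧ T'.prod = 1}

open Function

namespace Multiset

def ProdReduced {M : Type*} [CommMonoid M] (T : Multiset M) : Prop :=
  ∀ T' < T, T'.prod ≠ T.prod

section CommMonoid

variable {M : Type*} [CommMonoid M] {T : Multiset M}

theorem ProdReduced.eq_of_le_of_prod_eq {B C : Multiset M} (hT : T.ProdReduced) (hBC : B ≤ C)
    (hCT : C ≤ T) (h : B.prod = C.prod) : B = C := by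
  obtain ⟨E, rfl⟩ := le_iff_exists_add.mp hCT
  have hprod : (B + E).prod = (C + E).prod := by rw [prod_add, prod_add, h]
  by_contra hne
  exact hT _ (add_lt_add_left (lt_of_le_of_ne hBC hne) E) hprod

theorem ProdReduced.mono {B : Multiset M} (hT : T.ProdReduced) (hBT : B ≤ T) : B.ProdReduced :=
  fun _ hB' h => hB'.ne (hT.eq_of_le_of_prod_eq hB'.le hBT h)

theorem ProdReduced.card_lt_card [Fintype M] (hT : T.ProdReduced) : card T < Fintype.card M := by
  set L := T.toList
  have hL : (L : Multiset M) = T := coe_toList T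
  have hlen : L.length = card T := by rw [← hL, coe_card]
  -- pigeonhole on the prefix products of `T`: nested prefixes with equal products coincide
  have hinj : Injective fun k : Fin (card T + 1) => (L.take k).prod := by
    intro j k h
    wlog hjk : j ≤ k generalizing j k
    · exact (this h.symm (le_of_not_ge hjk)).symm
    have heq := hT.eq_of_le_of_prod_eq (coe_le.mpr (List.take_sublist_take_left hjk).subperm)
      (hL ▸ coe_le.mpr (List.take_sublist k L).subperm) (by simpa using h)
    have hcard := congrArg card heq
    simp only [coe_card, List.length_take] at hcard
    exact Fin.ext (by omega)
  simpa using Fintype.card_le_of_injective _ hinj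

end CommMonoid

theorem prodReduced_of_forall_prod_ne_one {G : Type*} [CommGroup G] {W : Multiset G}
    (hW : ∀ V ≤ W, V ≠ 0 → V.prod ≠ 1) : W.ProdReduced := by
  intro W' hlt h
  obtain ⟨V, rfl⟩ := le_iff_exists_add.mp hlt.le
  refine hW V (le_add_left _ _) (fun hV => hlt.ne (by rw [hV, add_zero])) ?_
  rw [prod_add] at h
  exact mul_eq_left.mp h.symm

theorem ProdReduced.map_val_add {M : Type*} [CommMonoid M] {W : Multiset Mˣ}
    (hW : W.ProdReduced) {A : Multiset M}
    (hA : ∀ C < A, ∀ u v : Mˣ, (u : M) * C.prod ≠ v * A.prod)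
    (hA_cancel : Injective fun u : Mˣ => (u : M) * A.prod) :
    (W.map Units.val + A).ProdReduced := by
  classical
  intro T' hlt hprod
  obtain ⟨V, hVT'⟩ : ∃ V : Multiset Mˣ, V.map Units.val = T' ∩ W.map Units.val :=
    CanLift.prf (T' ∩ W.map Units.val) fun x hx => by
      obtain ⟨u, -, rfl⟩ := mem_map.mp (mem_of_le inter_le_right hx)
      exact u.isUnit
  have hVW : V ≤ W := (map_le_map_iff Units.val_injective).mp (hVT' ▸ inter_le_right)
  have hCA : T' - W.map Units.val ≤ A := Multiset.sub_le_iff_le_add'.mpr hlt.le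
  have hsplit : T' - W.map Units.val + V.map Units.val = T' := hVT' ▸ sub_add_inter _ _
  have hprod' : (V.prod : M) * (T' - W.map Units.val).prod = W.prod * A.prod := by
    have hval (U : Multiset Mˣ) : ((U.prod : Mˣ) : M) = (U.map Units.val).prod :=
      map_multiset_prod (Units.coeHom M) U
    rw [← hsplit, prod_add, prod_add, mul_comm] at hprod
    rwa [hval, hval]
  have hC : T' - W.map Units.val = A := by
    by_contra hne
    exact hA _ (lt_of_le_of_ne hCA hne) _ _ hprod'
  rw [hC] at hprod'
  have hV : V = W := hW.eq_of_le_of_prod_eq hVW le_rfl (hA_cancel hprod')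
  exact hlt.ne (by rw [← hsplit, hC, hV, add_comm])

end Multiset

open Multiset

theorem card_lt_davenportM {S : Type*} [CommMonoid S] [Finite S] {T : Multiset S}
    (hT : T.ProdReduced) : card T < DavenportM S := by
  have := Fintype.ofFinite S
  rw [DavenportM, ← Nat.add_one_le_iff]
  apply le_csInf
  · refine ⟨Fintype.card S, Fintype.card_pos, fun U hU => ?_⟩
    by_contra! hred
    exact (ProdReduced.card_lt_card hred).ne hU
  · rintro ℓ ⟨-, hℓ⟩
    by_contra! hle
    obtain ⟨U, hU⟩ := card_pos_iff_exists_mem.mp <| (card_powersetCard ℓ T).symm ▸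
      Nat.choose_pos (Nat.le_of_lt_succ hle)
    rw [mem_powersetCard] at hU
    obtain ⟨U', hlt, h⟩ := hℓ U hU.2
    exact hT.mono hU.1 U' hlt h

theorem exists_prodReduced_card_eq_davenportG_sub_one (G : Type*) [CommGroup G] :
    ∃ W : Multiset G, card W = DavenportG G - 1 ∧ W.ProdReduced := by
  rcases Nat.lt_or_ge (DavenportG G) 2 with hD | hD
  · exact ⟨0, by simp only [card_zero]; omega, fun _ h => (not_lt_zero h).elim⟩
  · have hmem := Nat.notMem_of_lt_sInf (show DavenportG G - 1 < DavenportG G by omega)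
    simp only [Set.mem_ofPred_eq, not_and, not_forall, not_exists] at hmem
    obtain ⟨W, hW, hfree⟩ := hmem (by omega)
    exact ⟨W, hW, prodReduced_of_forall_prod_ne_one fun V hV hV0 => hfree V hV hV0⟩

section Pi

variable {ι : Type*} [DecidableEq ι] {M : ι → Type*} [∀ i, CommMonoid (M i)]

theorem Pi.units_mul_prod_mulSingle_injective (I : Finset ι) {e : ∀ i, M i}
    (he : ∀ i ∈ I, Injective fun u : (M i)ˣ => (u : M i) * e i) :
    Injective fun u : (∀ i, M i)ˣ => (u : ∀ i, M i) * ∏ i ∈ I, Pi.mulSingle i (e i) := by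
  intro u v h
  refine Units.ext (funext fun j => ?_)
  have hj := congrFun h j
  simp only [Pi.mul_apply, Finset.prod_apply, Finset.prod_pi_mulSingle] at hj
  split_ifs at hj with hjI
  · exact congrArg Units.val (he j hjI (a₁ := Units.map (Pi.evalMonoidHom M j) u)
      (a₂ := Units.map (Pi.evalMonoidHom M j) v) hj)
  · simpa using hj

theorem Pi.units_mul_prod_ne_of_lt_map_mulSingle (I : Finset ι) {e : ∀ i, M i}
    (he : ∀ i ∈ I, ¬IsUnit (e i)) {C : Multiset (∀ i, M i)}
    (hC : C < I.val.map fun i => Pi.mulSingle i (e i)) (u v : (∀ i, M i)ˣ) :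
    (u : ∀ i, M i) * C.prod ≠ v * (I.val.map fun i => Pi.mulSingle i (e i)).prod := by
  set A := I.val.map fun i => Pi.mulSingle i (e i)
  have hA : A.Nodup := I.nodup.map_on fun i hi j _ hij => by
    by_contra hne
    have hi' := congrFun hij i
    rw [Pi.mulSingle_eq_same, Pi.mulSingle_eq_of_ne hne] at hi'
    exact he i hi (hi' ▸ isUnit_one)
  obtain ⟨x, hxA, hxC⟩ : ∃ x ∈ A, x ∉ C := by
    by_contra! h
    exact hC.ne (le_antisymm hC.le ((Multiset.le_iff_subset hA).mpr h))
  obtain ⟨i, hi, rfl⟩ := Multiset.mem_map.mp hxA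
  have hCi : C.prod i = 1 := by
    rw [Pi.multiset_prod_apply]
    refine Multiset.prod_eq_one fun y hy => ?_
    obtain ⟨x, hx, rfl⟩ := Multiset.mem_map.mp hy
    obtain ⟨k, -, rfl⟩ := Multiset.mem_map.mp (Multiset.mem_of_le hC.le hx)
    exact Pi.mulSingle_eq_of_ne (fun hik => hxC (by subst hik; exact hx)) _
  intro h
  have hi' := congrFun h i
  rw [Pi.mul_apply, Pi.mul_apply, hCi, mul_one, ← Finset.prod_eq_multiset_prod,
    Finset.prod_apply, Finset.prod_pi_mulSingle, if_pos (show i ∈ I from hi)] at hi'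
  have hui : IsUnit ((u : ∀ i, M i) i) := u.isUnit.map (Pi.evalMonoidHom M i)
  exact he i hi (isUnit_of_mul_isUnit_right (hi' ▸ hui))

end Pi

theorem ZMod.exists_not_isUnit_units_mul_injective {n : ℕ} (h2 : 2 ∣ n) (h4 : ¬4 ∣ n) :
    ∃ e : ZMod n, ¬IsUnit e ∧ Injective fun u : (ZMod n)ˣ => (u : ZMod n) * e := by
  obtain ⟨m, rfl⟩ := h2
  have hm : Nat.Coprime 2 m :=
    (Nat.Prime.coprime_iff_not_dvd Nat.prime_two).mpr fun ⟨k, hk⟩ => h4 ⟨k, by omega⟩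
  let ψ := ZMod.chineseRemainder hm
  refine ⟨ψ.symm (0, 1), ?_, fun u v h => Units.ext (ψ.injective ?_)⟩
  · rw [isUnit_map_iff ψ.symm, Prod.isUnit_iff]
    simp
  · have hψ := congrArg ψ h
    simp only [map_mul, RingEquiv.apply_symm_apply] at hψ
    have hunit : ∀ x : ZMod 2, IsUnit x → x = 1 := by decide
    ext
    · exact (hunit _ ((u.isUnit.map ψ).map (RingHom.fst _ _))).trans
        (hunit _ ((v.isUnit.map ψ).map (RingHom.fst _ _))).symm
    · simpa using congrArg Prod.snd hψ

theorem davenport_ge_units_add_P2_general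
    (r : ℕ) (n : Fin r → ℕ) (hn : ∀ i, 1 < n i) :
    DavenportG ((i : Fin r) → ZMod (n i))ˣ
        + (Finset.univ.filter fun i : Fin r => 2 ∣ n i ∧ ¬ (4 ∣ n i)).card
      ≤ DavenportM ((i : Fin r) → ZMod (n i)) := by
  have : ∀ i, NeZero (n i) := fun i => ⟨(zero_lt_one.trans (hn i)).ne'⟩
  set I := Finset.univ.filter fun i : Fin r => 2 ∣ n i ∧ ¬ (4 ∣ n i)
  have hlocal : ∀ i, ∃ e : ZMod (n i), i ∈ I →
      ¬IsUnit e ∧ Injective fun u : (ZMod (n i))ˣ => (u : ZMod (n i)) * e := by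
    intro i
    by_cases hi : i ∈ I
    · obtain ⟨e, he⟩ := ZMod.exists_not_isUnit_units_mul_injective
        (Finset.mem_filter.mp hi).2.1 (Finset.mem_filter.mp hi).2.2
      exact ⟨e, fun _ => he⟩
    · exact ⟨1, fun h => (hi h).elim⟩
  choose e he using hlocal
  obtain ⟨W, hWcard, hW⟩ :=
    exists_prodReduced_card_eq_davenportG_sub_one ((i : Fin r) → ZMod (n i))ˣ
  have hT := hW.map_val_add
    (fun _ hC => Pi.units_mul_prod_ne_of_lt_map_mulSingle I (fun i hi => (he i hi).1) hC)
    (Pi.units_mul_prod_mulSingle_injective I fun i hi => (he i hi).2)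
  have := card_lt_davenportM hT
  simp only [Multiset.card_add, Multiset.card_map, hWcard, Finset.card_val] at this
  omega

theorem davenport_ge_units_add_P2
    (r : ℕ) (hr : 1 ≤ r) (n : Fin r → ℕ) (hn : ∀ i, 1 < n i) :
    DavenportG ((i : Fin r) → ZMod (n i))ˣ
        + (Finset.univ.filter fun i : Fin r => 2 ∣ n i ∧ ¬ (4 ∣ n i)).card
      ≤ DavenportM ((i : Fin r) → ZMod (n i)) :=
  davenport_ge_units_add_P2_general r n hn
end

section
/- Let G be a finite abelian group and let H be a subgroup of G. Then D(G) ≥ D(G/H) + D(H) − 1. -/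
/-!
Take product-one free multisets `TQ` in `G ⧸ H` and `TH` in `H` of the extremal sizes
`D(G ⧸ H) - 1` and `D(H) - 1`. Lift `TQ` to `G` through a section of the quotient map and add `TH`.
A product-one sub-multiset of the sum maps to a product-one sub-multiset of `TQ`, so its lifted
part is empty; what remains is a product-one sub-multiset of `TH`, hence empty too. This gives a
product-one free multiset of size `D(G ⧸ H) + D(H) - 2` in `G`.
-/

theorem List.exists_sublist_ne_nil_prod_eq_one {G : Type*} [LeftCancelMonoid G] [Fintype G]
    (l : List G) (hl : Fintype.card G ≤ l.length) :
    ∃ m, m.Sublist l ∧ m ≠ [] ∧ m.prod = 1 := by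
  obtain ⟨i, j, hne, heq⟩ := Fintype.exists_ne_map_eq_of_card_lt
    (fun k : Fin (l.length + 1) => (l.take k).prod) (by simpa [Nat.lt_succ_iff] using hl)
  wlog hij : i < j generalizing i j
  · exact this j i hne.symm heq.symm (by omega)
  refine ⟨(l.take j).drop i, (List.drop_sublist _ _).trans (List.take_sublist _ _), ?_, ?_⟩
  · rw [Ne, List.drop_eq_nil_iff, List.length_take]
    omega
  · have := (l.take j).prod_take_mul_prod_drop i
    rwa [List.take_take, Nat.min_eq_left (Fin.le_def.1 hij.le), heq, mul_eq_left] at this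

namespace Multiset

theorem exists_le_card_eq {α : Type*} {s : Multiset α} {n : ℕ} (h : n ≤ card s) :
    ∃ t ≤ s, card t = n := by
  obtain ⟨t, ht⟩ := card_pos_iff_exists_mem.1 (by rw [card_powersetCard]; exact Nat.choose_pos h)
  exact ⟨t, mem_powersetCard.1 ht⟩

variable {M : Type*} [CommMonoid M]

def IsProdOneFree (T : Multiset M) : Prop :=
  ∀ T' ≤ T, T' ≠ 0 → T'.prod ≠ 1

theorem not_isProdOneFree_of_card_le {G : Type*} [CommGroup G] [Fintype G] {T : Multiset G}
    (hT : Fintype.card G ≤ card T) : ¬ T.IsProdOneFree := by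
  obtain ⟨m, hm, hm0, hprod⟩ := T.toList.exists_sublist_ne_nil_prod_eq_one (by simpa using hT)
  intro hfree
  refine hfree m ?_ (by simpa using hm0) (by simpa using hprod)
  simpa using (coe_le.2 hm.subperm)

theorem IsProdOneFree.map_subtype {G : Type*} [CommGroup G] {H : Subgroup G} {T : Multiset H}
    (hT : T.IsProdOneFree) : (T.map ((↑) : H → G)).IsProdOneFree := by
  intro S hS hS0 hprod
  lift S to Multiset H using fun x hx => by
    obtain ⟨y, -, rfl⟩ := mem_map.1 (mem_of_le hS hx)
    exact y.2
  rw [map_le_map_iff Subtype.val_injective] at hS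
  refine hT S hS (by simpa using hS0) (Subtype.val_injective ?_)
  rwa [Subgroup.val_multiset_prod, OneMemClass.coe_one]

theorem IsProdOneFree.add_of_map {N : Type*} [CommMonoid N] (f : M →* N) {A B : Multiset M}
    (hA : (A.map f).IsProdOneFree) (hB : B.IsProdOneFree) (hBf : ∀ b ∈ B, f b = 1) :
    (A + B).IsProdOneFree := by
  classical
  intro T hT hT0 hprod
  have hsplit : T - A + T ∩ A = T := sub_add_inter T A
  have hTB : T - A ≤ B := tsub_le_iff_left.2 hT
  have hTA : T ∩ A = 0 := by
    by_contra hne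
    refine hA _ (map_le_map inter_le_right) (by simpa using hne) ?_
    have h1 : ((T - A).map f).prod = 1 :=
      prod_eq_one fun y hy => by
        obtain ⟨x, hx, rfl⟩ := mem_map.1 hy
        exact hBf x (mem_of_le hTB hx)
    calc (map f (T ∩ A)).prod = ((T - A).map f).prod * (map f (T ∩ A)).prod := by rw [h1, one_mul]
      _ = f T.prod := by rw [← prod_add, ← map_add, hsplit, map_multiset_prod]
      _ = 1 := by rw [hprod, map_one]
  rw [hTA, add_zero] at hsplit
  exact hB T (hsplit ▸ hTB) hT0 hprod

end Multiset

open Multiset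

theorem exists_isProdOneFree_card_eq_davenportG_sub_one (G : Type*) [CommGroup G] :
    ∃ T : Multiset G, T.IsProdOneFree ∧ card T = DavenportG G - 1 := by
  rcases Nat.lt_or_ge (DavenportG G) 2 with h | h
  · exact ⟨0, fun T' hT' hT'0 => absurd (le_zero.1 hT') hT'0, by rw [card_zero]; omega⟩
  unfold DavenportG at h ⊢
  have hnot := Nat.notMem_of_lt_sInf (Nat.sub_one_lt_of_lt h)
  simp only [Set.mem_ofPred_eq, not_and, not_forall] at hnot
  obtain ⟨T, hT, hfree⟩ := hnot (by omega)
  exact ⟨T, fun T' hle hne hprod => hfree ⟨T', hle, hne, hprod⟩, hT⟩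

theorem Multiset.IsProdOneFree.card_lt_davenportG {G : Type*} [CommGroup G] [Fintype G]
    {T : Multiset G} (hT : T.IsProdOneFree) : card T < DavenportG G := by
  unfold DavenportG
  refine Nat.lt_of_succ_le (le_csInf ⟨Fintype.card G, Fintype.card_pos, fun S hS => ?_⟩ ?_)
  · simpa [IsProdOneFree] using not_isProdOneFree_of_card_le hS.ge
  rintro n ⟨-, hn⟩
  by_contra! hlt
  obtain ⟨S, hST, hS⟩ := exists_le_card_eq (Nat.le_of_lt_succ hlt)
  obtain ⟨T', hT'S, hT'0, hprod⟩ := hn S hS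
  exact hT T' (hT'S.trans hST) hT'0 hprod

theorem davenport_quotient_lower_bound
    (G : Type*) [CommGroup G] [Fintype G] (H : Subgroup G) :
    DavenportG (G ⧸ H) + DavenportG H - 1 ≤ DavenportG G := by
  obtain ⟨TQ, hTQ, hTQcard⟩ := exists_isProdOneFree_card_eq_davenportG_sub_one (G ⧸ H)
  obtain ⟨TH, hTH, hTHcard⟩ := exists_isProdOneFree_card_eq_davenportG_sub_one H
  have hlift : (TQ.map Quotient.out).map (QuotientGroup.mk' H) = TQ := by
    simp [map_map]
  have hfree : (TQ.map Quotient.out + TH.map ((↑) : H → G)).IsProdOneFree :=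
    (hlift ▸ hTQ).add_of_map (QuotientGroup.mk' H) hTH.map_subtype fun g hg => by
      obtain ⟨h, -, rfl⟩ := mem_map.1 hg
      exact (QuotientGroup.eq_one_iff _).2 h.2
  have hcard := hfree.card_lt_davenportG
  simp only [card_add, card_map] at hcard
  omega
end

section
/- Let r ≥ 1 and n_1, …, n_r > 1 be integers and let R = ℤ_{n_1} ⊕ ⋯ ⊕ ℤ_{n_r} with multiplicative monoid S_R. Let a, b ∈ R with b dividing a in S_R but a not dividing b. Suppose there exists an index t ∈ [1,r] such that either (1) for some prime p > 2, pot_p(gcd(b_t, n_t)) < pot_p(gcd(a_t, n_t)), or (2) pot_2(gcd(b_t, n_t)) < pot_2(gcd(a_t, n_t)) < pot_2(n_t). Then St(b) is a proper subset of St(a), where for c ∈ R the stabilizer St(c) is the set of units u ∈ Rˣ with u·c = c, and x_i denotes the canonical integer representative in [0, n_i − 1] of the i-th coordinate of x ∈ R. -/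
/-!
Let `N = n t`, let `p` be the prime of the hypothesis, `k = pot_p(gcd(a_t, N))` and
`m = N / p ^ k`. Then `p ^ k` divides `a_t` but not `b_t`, so `c * m * a_t ≡ 0` while
`c * m * b_t ≢ 0 (mod N)` for every `c` prime to `p`. For a suitable `c ∈ {1, 2}` the number
`1 + c * m` is prime to `p` (for `p = 2` because `k < pot_2(N)` makes `m` even), hence a unit
mod `N = p ^ k * m`, and the unit of `R` equal to it in coordinate `t` and to `1` elsewhere fixes
`a` but not `b`. The inclusion `St(b) ⊆ St(a)` only needs `b ∣ a`.
-/

theorem Units.mul_eq_self_of_dvd {M : Type*} [CommMonoid M] {a b : M} (hba : b ∣ a) {u : Mˣ}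
    (hu : (u : M) * b = b) : (u : M) * a = a := by
  obtain ⟨d, rfl⟩ := hba
  rw [← mul_assoc, hu]

theorem Pi.mulSingle_mul_eq_self_iff {ι : Type*} [DecidableEq ι] {M : ι → Type*}
    [∀ i, MulOneClass (M i)] (t : ι) (w : M t) (a : ∀ i, M i) :
    Pi.mulSingle t w * a = a ↔ w * a t = a t := by
  refine ⟨fun h => by simpa using congrFun h t, fun h => funext fun i => ?_⟩
  rcases eq_or_ne i t with rfl | hi
  · simpa using h
  · simp [Pi.mulSingle_eq_of_ne hi]

namespace Nat

/-- Since `(1 + m) + m = 1 + 2 * m`, an odd prime cannot divide both `1 + m` and `1 + 2 * m`. -/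
theorem exists_not_dvd_and_not_dvd_one_add_mul {p m : ℕ} (hp : p.Prime) (h : 2 < p ∨ p ∣ m) :
    ∃ c, ¬ p ∣ c ∧ ¬ p ∣ 1 + c * m := by
  rcases h with hp2 | hm
  · by_cases h1 : p ∣ 1 + m
    · refine ⟨2, fun hd => by have := le_of_dvd two_pos hd; omega, fun h2 => hp.not_dvd_one ?_⟩
      have hm : p ∣ m := by simpa [show 1 + 2 * m - (1 + m) = m by omega] using dvd_sub h2 h1
      exact (Nat.dvd_add_left hm).mp h1
    · exact ⟨1, hp.not_dvd_one, by rwa [one_mul]⟩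
  · exact ⟨1, hp.not_dvd_one, fun h1 =>
      hp.not_dvd_one ((Nat.dvd_add_left hm).mp (by rwa [one_mul] at h1))⟩

theorem not_pow_dvd_of_factorization_gcd_lt {A B N p : ℕ} (hN : N ≠ 0) (hp : p.Prime)
    (h : (B.gcd N).factorization p < (A.gcd N).factorization p) :
    ¬ p ^ (A.gcd N).factorization p ∣ B := fun hB => by
  have hN' : p ^ (A.gcd N).factorization p ∣ N :=
    (ordProj_dvd _ _).trans (gcd_dvd_right _ _)
  have := (hp.pow_dvd_iff_le_factorization (gcd_ne_zero_right hN)).mp (dvd_gcd hB hN')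
  omega

theorem dvd_div_pow_of_lt_factorization {N p k : ℕ} (hp : p.Prime)
    (h : k < N.factorization p) : p ∣ N / p ^ k := by
  have hN : N ≠ 0 := by rintro rfl; simp at h
  refine dvd_div_of_mul_dvd ?_
  rw [← pow_succ]
  exact (hp.pow_dvd_iff_le_factorization hN).mpr h

end Nat

namespace ZMod

theorem natCast_one_add_mul_div_mul_eq_self_iff {N d c : ℕ} [NeZero N] (hd : d ∣ N)
    (hc : c.Coprime d) (z : ZMod N) :
    ((1 + c * (N / d) : ℕ) : ZMod N) * z = z ↔ d ∣ z.val := by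
  have hm : 0 < N / d := Nat.div_pos (Nat.le_of_dvd (NeZero.pos N) hd)
    (Nat.pos_of_dvd_of_pos hd (NeZero.pos N))
  calc ((1 + c * (N / d) : ℕ) : ZMod N) * z = z
      ↔ ((c * z.val * (N / d) : ℕ) : ZMod N) = 0 := by
        conv_lhs => rw [← natCast_zmod_val z]
        push_cast
        constructor <;> intro h <;> linear_combination h
    _ ↔ d * (N / d) ∣ c * z.val * (N / d) := by rw [natCast_eq_zero_iff, Nat.mul_div_cancel' hd]
    _ ↔ d ∣ z.val := by rw [Nat.mul_dvd_mul_iff_right hm]; exact hc.symm.dvd_mul_left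

theorem exists_unit_mul_eq_self_and_mul_ne_self {N p k : ℕ} [NeZero N] (hp : p.Prime)
    (hk : p ^ k ∣ N) (hodd : 2 < p ∨ p ∣ N / p ^ k) {x y : ZMod N} (hx : p ^ k ∣ x.val)
    (hy : ¬ p ^ k ∣ y.val) : ∃ u : (ZMod N)ˣ, (u : ZMod N) * x = x ∧ (u : ZMod N) * y ≠ y := by
  obtain ⟨c, hpc, hpu⟩ := Nat.exists_not_dvd_and_not_dvd_one_add_mul hp hodd
  have hc : c.Coprime (p ^ k) := ((hp.coprime_iff_not_dvd).mpr hpc).symm.pow_right k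
  have hu : (1 + c * (N / p ^ k)).Coprime N := by
    conv_rhs => rw [← Nat.mul_div_cancel' hk]
    exact .mul_right (((hp.coprime_iff_not_dvd).mpr hpu).symm.pow_right k)
      ((Nat.coprime_add_mul_right_left 1 _ c).mpr (Nat.coprime_one_left _))
  have hfix := natCast_one_add_mul_div_mul_eq_self_iff hk hc
  exact ⟨unitOfCoprime _ hu, by rw [coe_unitOfCoprime, hfix]; exact hx,
    by rw [coe_unitOfCoprime, ne_eq, hfix]; exact hy⟩

end ZMod

theorem stabilizer_ssubset_of_green_lt_general
    (r : ℕ) (n : Fin r → ℕ) (hn : ∀ i, 1 < n i)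
    (a b : (i : Fin r) → ZMod (n i)) (hba : b ∣ a)
    (t : Fin r)
    (ht : (∃ p : ℕ, p.Prime ∧ 2 < p ∧
            (Nat.gcd ((b t).val) (n t)).factorization p
              < (Nat.gcd ((a t).val) (n t)).factorization p)
        ∨ ((Nat.gcd ((b t).val) (n t)).factorization 2
              < (Nat.gcd ((a t).val) (n t)).factorization 2
            ∧ (Nat.gcd ((a t).val) (n t)).factorization 2
              < (n t).factorization 2)) :
    {u : ((i : Fin r) → ZMod (n i))ˣ | (u : (i : Fin r) → ZMod (n i)) * b = b}
      ⊂ {u : ((i : Fin r) → ZMod (n i))ˣ | (u : (i : Fin r) → ZMod (n i)) * a = a} := by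
  have : NeZero (n t) := ⟨by have := hn t; omega⟩
  obtain ⟨p, hp, hv, hodd⟩ : ∃ p : ℕ, p.Prime ∧
      ((b t).val.gcd (n t)).factorization p < ((a t).val.gcd (n t)).factorization p ∧
      (2 < p ∨ p ∣ n t / p ^ ((a t).val.gcd (n t)).factorization p) := by
    rcases ht with ⟨p, hp, h2, hv⟩ | ⟨hv, hlt⟩
    · exact ⟨p, hp, hv, .inl h2⟩
    · exact ⟨2, Nat.prime_two, hv, .inr (Nat.dvd_div_pow_of_lt_factorization Nat.prime_two hlt)⟩
  obtain ⟨w, hwa, hwb⟩ := ZMod.exists_unit_mul_eq_self_and_mul_ne_self hp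
    ((Nat.ordProj_dvd _ _).trans (Nat.gcd_dvd_right _ _)) hodd
    ((Nat.ordProj_dvd _ _).trans (Nat.gcd_dvd_left _ _))
    (Nat.not_pow_dvd_of_factorization_gcd_lt (NeZero.ne _) hp hv)
  refine (Set.ssubset_iff_of_subset fun u hu => Units.mul_eq_self_of_dvd hba hu).mpr
    ⟨Units.map (MonoidHom.mulSingle (fun i => ZMod (n i)) t) w,
      (Pi.mulSingle_mul_eq_self_iff t _ a).mpr hwa,
      fun h => hwb ((Pi.mulSingle_mul_eq_self_iff t _ b).mp h)⟩

theorem stabilizer_ssubset_of_green_lt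
    (r : ℕ) (hr : 1 ≤ r) (n : Fin r → ℕ) (hn : ∀ i, 1 < n i)
    (a b : (i : Fin r) → ZMod (n i)) (hba : b ∣ a) (hab : ¬ a ∣ b)
    (t : Fin r)
    (ht : (∃ p : ℕ, p.Prime ∧ 2 < p ∧
            (Nat.gcd ((b t).val) (n t)).factorization p
              < (Nat.gcd ((a t).val) (n t)).factorization p)
        ∨ ((Nat.gcd ((b t).val) (n t)).factorization 2
              < (Nat.gcd ((a t).val) (n t)).factorization 2
            ∧ (Nat.gcd ((a t).val) (n t)).factorization 2
              < (n t).factorization 2)) :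
    {u : ((i : Fin r) → ZMod (n i))ˣ | (u : (i : Fin r) → ZMod (n i)) * b = b}
      ⊂ {u : ((i : Fin r) → ZMod (n i))ˣ | (u : (i : Fin r) → ZMod (n i)) * a = a} :=
  stabilizer_ssubset_of_green_lt_general r n hn a b hba t ht
end

section
/- Let q be an odd prime, let n be a positive integer, and let α be a nonnegative integer with q^α dividing n. Then gcd(n/q^α + 1, n) = 1 or gcd(2·(n/q^α) + 1, n) = 1. -/
/-!
With `m = n / q ^ α` we have `n = q ^ α * m`, and both `m + 1` and `2 * m + 1` are coprime
to `m`. So each of them is coprime to `n` unless `q` divides it, and `q` cannot divide both,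
since `2 * (m + 1) = (2 * m + 1) + 1`.
-/

theorem Nat.Coprime.prime_pow_mul {q k m : ℕ} (hq : q.Prime) (hqk : ¬q ∣ k)
    (hkm : k.Coprime m) (α : ℕ) : k.Coprime (q ^ α * m) :=
  (((hq.coprime_iff_not_dvd.mpr hqk).symm).pow_right α).mul_right hkm

theorem Nat.Prime.not_dvd_succ_and_two_mul_succ {q : ℕ} (hq : q.Prime) (m : ℕ) :
    ¬(q ∣ m + 1 ∧ q ∣ 2 * m + 1) := by
  rintro ⟨hm, h2m⟩
  have hsucc : q ∣ (2 * m + 1) + 1 := by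
    rw [show (2 * m + 1) + 1 = 2 * (m + 1) by ring]
    exact hm.mul_left 2
  exact hq.not_dvd_one ((Nat.dvd_add_right h2m).mp hsucc)

theorem gcd_succ_div_prime_pow_eq_one_general
    (q : ℕ) (hq : q.Prime) (n : ℕ)
    (α : ℕ) (hdvd : q ^ α ∣ n) :
    Nat.gcd (n / q ^ α + 1) n = 1 ∨ Nat.gcd (2 * (n / q ^ α) + 1) n = 1 := by
  obtain ⟨m, rfl⟩ := hdvd
  rw [Nat.mul_div_cancel_left m (pow_pos hq.pos α)]
  have hcop₁ : (m + 1).Coprime m := by simp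
  have hcop₂ : (2 * m + 1).Coprime m := by simp
  by_cases hq₁ : q ∣ m + 1
  · have hq₂ : ¬q ∣ 2 * m + 1 := fun h => hq.not_dvd_succ_and_two_mul_succ m ⟨hq₁, h⟩
    exact Or.inr (hcop₂.prime_pow_mul hq hq₂ α)
  · exact Or.inl (hcop₁.prime_pow_mul hq hq₁ α)

theorem gcd_succ_div_prime_pow_eq_one
    (q : ℕ) (hq : q.Prime) (hodd : Odd q) (n : ℕ) (hn : 0 < n)
    (α : ℕ) (hdvd : q ^ α ∣ n) :
    Nat.gcd (n / q ^ α + 1) n = 1 ∨ Nat.gcd (2 * (n / q ^ α) + 1) n = 1 :=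
  gcd_succ_div_prime_pow_eq_one_general q hq n α hdvd
end

section
/- Let r ≥ 1 and n_1, …, n_r > 1 be integers and let R = ℤ_{n_1} ⊕ ⋯ ⊕ ℤ_{n_r} with multiplicative monoid S_R. Let I = {i ∈ [1,r] : 2 ∣ n_i but 4 ∤ n_i}, and for i ∈ I let b_i ∈ R be the element whose i-th coordinate is 2 and all other coordinates are 1. Let A be a multiset of elements of the unit group Rˣ (viewed as elements of S_R) that is irreducible, i.e., no proper sub-multiset of A has the same product as A. Then the multiset B obtained from A by adjoining b_i for each i ∈ I is also irreducible in S_R. -/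
/-!
Write `X` for the units of `A`, `Y` for the added elements `b_i`, and split a proper
sub-multiset of `X + Y` as `X' + Y'` with `X' ≤ X`, `Y' ≤ Y`. If `Y' = Y`, then `X' < X`, and the
factor `∏ b_i` can be cancelled between the unit products `∏ X'` and `∏ X`: in `ℤ_n` with
`n ≡ 2 mod 4` doubling is injective on units, since `ℤ_n ≅ ℤ_2 × ℤ_{n/2}`, all units agree in
`ℤ_2` and `2` is invertible in `ℤ_{n/2}`. If `Y' < Y`, some `b_i` is missing, and reducing the
`i`-th coordinate mod `2` sends the sub-product to `1` but the full product to `0`.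
-/

namespace Multiset

variable {M : Type*} [CommMonoid M]

def IsProdIrreducible (T : Multiset M) : Prop :=
  ∀ T' < T, T'.prod ≠ T.prod

theorem IsProdIrreducible.add {X Y : Multiset M} (hX : X.IsProdIrreducible)
    (hcancel : ∀ X' ≤ X, X'.prod * Y.prod = X.prod * Y.prod → X'.prod = X.prod)
    (hY : ∀ X' ≤ X, ∀ Y' < Y, X'.prod * Y'.prod ≠ X.prod * Y.prod) :
    (X + Y).IsProdIrreducible := by
  classical
  intro B hB hprod
  have hsplit : B ∩ X + (B - X) = B := by rw [add_comm, sub_add_inter]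
  have hX' : B ∩ X ≤ X := inter_le_right
  have hY' : B - X ≤ Y := Multiset.sub_le_iff_le_add'.2 hB.le
  rw [← hsplit, prod_add, prod_add] at hprod
  rcases hY'.lt_or_eq with hlt | hYeq
  · exact hY _ hX' _ hlt hprod
  · rw [hYeq] at hsplit hprod
    have hlt : B ∩ X < X := by
      rwa [← hsplit, add_lt_add_iff_right] at hB
    exact hX _ hlt (hcancel _ hX' hprod)

end Multiset

namespace ZMod

theorem eq_one_of_isUnit {a : ZMod 2} (ha : IsUnit a) : a = 1 := by
  revert a
  decide

theorem eq_of_mul_two_eq_mul_two {n : ℕ} (h2 : 2 ∣ n) (h4 : ¬ 4 ∣ n) {x y : ZMod n}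
    (hx : IsUnit x) (hy : IsUnit y) (h : x * 2 = y * 2) : x = y := by
  obtain ⟨m, rfl⟩ := h2
  have hm : Odd m := by
    rw [Nat.odd_iff, ← Nat.two_dvd_ne_zero]
    exact fun hm => h4 (by simpa [show 4 = 2 * 2 from rfl] using Nat.mul_dvd_mul_left 2 hm)
  let e := chineseRemainder (Nat.coprime_two_left.2 hm)
  have he := congrArg e h
  rw [map_mul, map_mul, map_ofNat] at he
  apply e.injective
  ext
  · exact (eq_one_of_isUnit ((hx.map e).map (RingHom.fst _ _))).trans
      (eq_one_of_isUnit ((hy.map e).map (RingHom.fst _ _))).symm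
  · have h2 : IsUnit (2 : ZMod m) := by
      simpa using (isUnit_iff_coprime 2 m).2 (Nat.coprime_two_left.2 hm)
    exact h2.mul_left_injective (congrArg Prod.snd he)

end ZMod

section ProdZMod

variable {ι : Type*} [DecidableEq ι] {n : ι → ℕ}

def parityAt (i : ι) (h : 2 ∣ n i) : ((j : ι) → ZMod (n j)) →+* ZMod 2 :=
  (ZMod.castHom h (ZMod 2)).comp (Pi.evalRingHom (fun j => ZMod (n j)) i)

theorem parityAt_mulSingle_two (i k : ι) (h : 2 ∣ n i) :
    parityAt i h (Pi.mulSingle k 2) = if k = i then 0 else 1 := by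
  simp only [parityAt, RingHom.comp_apply, Pi.evalRingHom_apply]
  split_ifs with hki
  · subst hki
    rw [Pi.mulSingle_eq_same, map_ofNat]
    rfl
  · rw [Pi.mulSingle_eq_of_ne' hki, map_one]

theorem eq_of_mul_prod_mulSingle_two_eq {I : Finset ι} (hI : ∀ i ∈ I, 2 ∣ n i ∧ ¬ 4 ∣ n i)
    {u v : (i : ι) → ZMod (n i)} (hu : IsUnit u) (hv : IsUnit v)
    (h : u * ∏ i ∈ I, Pi.mulSingle i 2 = v * ∏ i ∈ I, Pi.mulSingle i 2) : u = v := by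
  funext j
  have hj := congrFun h j
  rw [Pi.mul_apply, Pi.mul_apply, Finset.prod_apply,
    Finset.prod_pi_mulSingle (M := fun k => ZMod (n k)) j (fun _ => 2) I] at hj
  split_ifs at hj with hjI
  · exact ZMod.eq_of_mul_two_eq_mul_two (hI j hjI).1 (hI j hjI).2
      (hu.map (Pi.evalRingHom _ j)) (hv.map (Pi.evalRingHom _ j)) hj
  · simpa using hj

theorem mul_prod_ne_mul_prod_mulSingle_two {I : Finset ι} (hI : ∀ i ∈ I, 2 ∣ n i)
    {u v : (i : ι) → ZMod (n i)} (hu : IsUnit u) (hv : IsUnit v)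
    {Y : Multiset ((i : ι) → ZMod (n i))} (hY : Y < I.val.map fun i => Pi.mulSingle i 2) :
    u * Y.prod ≠ v * ∏ i ∈ I, Pi.mulSingle i 2 := by
  have hinj : Set.InjOn (fun i => (Pi.mulSingle i 2 : (j : ι) → ZMod (n j))) I := by
    intro i hi k _ hik
    by_contra hne
    have := congrArg (parityAt i (hI i hi)) hik
    rw [parityAt_mulSingle_two, parityAt_mulSingle_two, if_pos rfl, if_neg (Ne.symm hne)] at this
    exact zero_ne_one this
  have hnodup : (I.val.map fun i => (Pi.mulSingle i 2 : (j : ι) → ZMod (n j))).Nodup :=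
    I.nodup.map_on hinj
  obtain ⟨i, hi, hiY⟩ : ∃ i ∈ I, Pi.mulSingle i 2 ∉ Y := by
    by_contra! hsub
    refine hY.not_ge ((Multiset.le_iff_subset hnodup).2 fun x hx => ?_)
    obtain ⟨i, hi, rfl⟩ := Multiset.mem_map.1 hx
    exact hsub i hi
  intro h
  have := congrArg (parityAt i (hI i hi)) h
  rw [map_mul, map_mul, ZMod.eq_one_of_isUnit (hu.map _),
    ZMod.eq_one_of_isUnit (hv.map _), map_multiset_prod, map_prod,
    Multiset.prod_eq_one, Finset.prod_eq_zero hi] at this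
  · exact one_ne_zero this
  · simp [parityAt_mulSingle_two]
  · intro x hx
    obtain ⟨y, hy, rfl⟩ := Multiset.mem_map.1 hx
    obtain ⟨k, -, rfl⟩ := Multiset.mem_map.1 (Multiset.mem_of_le hY.le hy)
    rw [parityAt_mulSingle_two, if_neg]
    rintro rfl
    exact hiY hy

end ProdZMod

theorem irreducible_extension_by_doubly_even_coordinates_general
    (r : ℕ) (n : Fin r → ℕ)
    (b : Fin r → ((j : Fin r) → ZMod (n j)))
    (hb : ∀ i j, b i j = if j = i then 2 else 1)
    (A : Multiset ((i : Fin r) → ZMod (n i))ˣ)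
    (hA : ∀ A' < A.map (fun u => (u : (i : Fin r) → ZMod (n i))),
      A'.prod ≠ (A.map (fun u => (u : (i : Fin r) → ZMod (n i)))).prod)
    (B : Multiset ((i : Fin r) → ZMod (n i)))
    (hB : B = A.map (fun u => (u : (i : Fin r) → ZMod (n i)))
        + (Finset.univ.filter fun i : Fin r => 2 ∣ n i ∧ ¬ (4 ∣ n i)).val.map b) :
    ∀ B' < B, B'.prod ≠ B.prod := by
  obtain rfl : b = fun i => Pi.mulSingle i 2 := by
    ext i j
    rw [hb]
    split_ifs with hji
    · subst hji
      rw [Pi.mulSingle_eq_same]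
    · rw [Pi.mulSingle_eq_of_ne hji]
  have hI : ∀ i ∈ Finset.univ.filter fun i : Fin r => 2 ∣ n i ∧ ¬ (4 ∣ n i),
      2 ∣ n i ∧ ¬ 4 ∣ n i := fun i hi => (Finset.mem_filter.1 hi).2
  have hunit : ∀ X' ≤ A.map (fun u => (u : (i : Fin r) → ZMod (n i))), IsUnit X'.prod :=
    fun X' hX' => IsUnit.multisetProd_iff.2 fun x hx => by
      have hxA := Multiset.mem_of_le hX' hx
      -- the coercion in the statement elaborates through the `Multiset` monad
      simp only [Multiset.pure_def, Multiset.bind_def, Multiset.bind_singleton, Multiset.map_map,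
        Function.comp_apply, Multiset.mem_map] at hxA
      obtain ⟨u, -, rfl⟩ := hxA
      exact u.isUnit
  subst hB
  refine Multiset.IsProdIrreducible.add hA (fun X' hX' h => ?_) (fun X' hX' Y' hY' => ?_)
  · exact eq_of_mul_prod_mulSingle_two_eq hI (hunit X' hX') (hunit _ le_rfl) h
  · exact mul_prod_ne_mul_prod_mulSingle_two (fun i hi => (hI i hi).1)
      (hunit X' hX') (hunit _ le_rfl) hY'

theorem irreducible_extension_by_doubly_even_coordinates
    (r : ℕ) (hr : 1 ≤ r) (n : Fin r → ℕ) (hn : ∀ i, 1 < n i)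
    (b : Fin r → ((j : Fin r) → ZMod (n j)))
    (hb : ∀ i j, b i j = if j = i then 2 else 1)
    (A : Multiset ((i : Fin r) → ZMod (n i))ˣ)
    (hA : ∀ A' < A.map (fun u => (u : (i : Fin r) → ZMod (n i))),
      A'.prod ≠ (A.map (fun u => (u : (i : Fin r) → ZMod (n i)))).prod)
    (B : Multiset ((i : Fin r) → ZMod (n i)))
    (hB : B = A.map (fun u => (u : (i : Fin r) → ZMod (n i)))
        + (Finset.univ.filter fun i : Fin r => 2 ∣ n i ∧ ¬ (4 ∣ n i)).val.map b) :
    ∀ B' < B, B'.prod ≠ B.prod :=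
  irreducible_extension_by_doubly_even_coordinates_general r n b hb A hA B hB
end

section
/- Let r ≥ 1 and n_1, …, n_r > 1 be integers and let R = ℤ_{n_1} ⊕ ⋯ ⊕ ℤ_{n_r} with multiplicative monoid S_R. Let a, b ∈ R and suppose that for every i ∈ [1,r] and every prime q dividing n_i with pot_q(gcd(b_i, n_i)) < pot_q(n_i), q does not divide a_i, where x_i denotes the canonical integer representative in [0, n_i − 1] of the i-th coordinate of x ∈ R. Then there exists a unit u ∈ Rˣ such that b·u = b·a. -/
/-!
Coordinatewise, write `g = gcd(b, n)` and `m = n / g`, so that `b * m = 0` in `ℤ/n`. Every prime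
dividing `m` occurs in `n` to a higher power than in `g`, so the hypothesis makes `a` coprime to `m`.
Hence `a` is a unit modulo `m` and lifts to a unit `u` of `ℤ/n`; then `m ∣ u - a`, and multiplying
by `b` kills the difference.
-/

namespace Nat

theorem coprime_div_of_factorization_lt {a g n : ℕ} (hn : n ≠ 0) (hg : g ∣ n)
    (h : ∀ q : ℕ, q.Prime → q ∣ n → g.factorization q < n.factorization q → ¬ q ∣ a) :
    a.Coprime (n / g) := by
  refine Nat.coprime_of_dvd fun q hq hqa hqm => h q hq (hqm.trans (Nat.div_dvd_of_dvd hg)) ?_ hqa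
  have hm : n / g ≠ 0 := (Nat.div_pos (Nat.le_of_dvd (Nat.pos_of_ne_zero hn) hg)
    (Nat.pos_of_dvd_of_pos hg (Nat.pos_of_ne_zero hn))).ne'
  have hpos := hq.factorization_pos_of_dvd hm hqm
  rw [Nat.factorization_div hg, Finsupp.tsub_apply] at hpos
  omega

end Nat

namespace ZMod

variable {m n : ℕ}

theorem mul_natCast_div_gcd_val_eq_zero [NeZero n] (b : ZMod n) :
    b * ((n / b.val.gcd n : ℕ) : ZMod n) = 0 := by
  have hlcm : b.val * (n / b.val.gcd n) = b.val.lcm n :=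
    (Nat.mul_div_assoc _ (Nat.gcd_dvd_right _ _)).symm
  calc b * ((n / b.val.gcd n : ℕ) : ZMod n) = ((b.val.lcm n : ℕ) : ZMod n) := by
        rw [← hlcm, Nat.cast_mul, natCast_zmod_val]
    _ = 0 := (natCast_eq_zero_iff _ _).mpr (Nat.dvd_lcm_right _ _)

theorem natCast_dvd_sub_of_cast_eq [NeZero n] {x y : ZMod n}
    (hxy : (cast x : ZMod m) = cast y) : (m : ZMod n) ∣ y - x := by
  rw [cast_eq_val, cast_eq_val, ← Int.cast_natCast, ← Int.cast_natCast (R := ZMod m) y.val,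
    intCast_eq_intCast_iff_dvd_sub] at hxy
  simpa using map_dvd (Int.castRingHom (ZMod n)) hxy

theorem exists_unit_mul_eq_mul_of_isUnit_cast [NeZero n] (hm : m ∣ n) {a b : ZMod n}
    (hbm : b * m = 0) (ha : IsUnit (cast a : ZMod m)) :
    ∃ u : (ZMod n)ˣ, b * u = b * a := by
  obtain ⟨u, hu⟩ := unitsMap_surjective hm ha.unit
  have hua : (cast (u : ZMod n) : ZMod m) = cast a := congrArg Units.val hu
  obtain ⟨k, hk⟩ := natCast_dvd_sub_of_cast_eq hua.symm
  refine ⟨u, ?_⟩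
  rw [← sub_eq_zero, ← mul_sub, hk, ← mul_assoc, hbm, zero_mul]

theorem exists_unit_mul_eq_mul [NeZero n] (a b : ZMod n)
    (h : ∀ q : ℕ, q.Prime → q ∣ n →
      (b.val.gcd n).factorization q < n.factorization q → ¬ q ∣ a.val) :
    ∃ u : (ZMod n)ˣ, b * u = b * a := by
  have hg : b.val.gcd n ∣ n := Nat.gcd_dvd_right _ _
  have hcop : a.val.Coprime (n / b.val.gcd n) :=
    Nat.coprime_div_of_factorization_lt (NeZero.ne n) hg h
  refine exists_unit_mul_eq_mul_of_isUnit_cast (Nat.div_dvd_of_dvd hg)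
    (mul_natCast_div_gcd_val_eq_zero b) ?_
  rwa [cast_eq_val, isUnit_iff_coprime]

end ZMod

theorem exists_unit_absorbing_general
    (r : ℕ) (n : Fin r → ℕ) (hn : ∀ i, 1 < n i)
    (a b : (i : Fin r) → ZMod (n i))
    (h : ∀ i : Fin r, ∀ q : ℕ, q.Prime → q ∣ n i →
      (Nat.gcd ((b i).val) (n i)).factorization q < (n i).factorization q →
      ¬ q ∣ (a i).val) :
    ∃ u : ((i : Fin r) → ZMod (n i))ˣ,
      b * (u : (i : Fin r) → ZMod (n i)) = b * a := by
  have : ∀ i, NeZero (n i) := fun i => ⟨by have := hn i; omega⟩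
  choose u hu using fun i => ZMod.exists_unit_mul_eq_mul (a i) (b i) (h i)
  exact ⟨MulEquiv.piUnits.symm u, funext hu⟩

theorem exists_unit_absorbing
    (r : ℕ) (hr : 1 ≤ r) (n : Fin r → ℕ) (hn : ∀ i, 1 < n i)
    (a b : (i : Fin r) → ZMod (n i))
    (h : ∀ i : Fin r, ∀ q : ℕ, q.Prime → q ∣ n i →
      (Nat.gcd ((b i).val) (n i)).factorization q < (n i).factorization q →
      ¬ q ∣ (a i).val) :
    ∃ u : ((i : Fin r) → ZMod (n i))ˣ,
      b * (u : (i : Fin r) → ZMod (n i)) = b * a :=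
  exists_unit_absorbing_general r n hn a b h
end

section
/- Let r_1, r_2, r_3 be nonnegative integers, not all zero, and let R = ℤ_8^{r_1} ⊕ ℤ_4^{r_2} ⊕ ℤ_2^{r_3} with multiplicative monoid S_R. For each coordinate position j of R, let a_j ∈ R be the element whose j-th coordinate is 2 and all other coordinates are 1. Then the multiset consisting of 3 copies of a_j for each ℤ_8-coordinate j, 2 copies of a_j for each ℤ_4-coordinate j, and 1 copy of a_j for each ℤ_2-coordinate j, is irreducible in S_R, i.e., no proper sub-multiset of it has the same product as the whole multiset. -/
/-- The ring `ℤ₈^{r₁} ⊕ ℤ₄^{r₂} ⊕ ℤ₂^{r₃}`. -/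
abbrev RingR (r₁ r₂ r₃ : ℕ) : Type :=
  (Fin r₁ → ZMod 8) × (Fin r₂ → ZMod 4) × (Fin r₃ → ZMod 2)

/-- The element of `RingR` with `2` at the `j`-th `ℤ₈`-coordinate and `1` elsewhere. -/
def e8 (r₁ r₂ r₃ : ℕ) (j : Fin r₁) : RingR r₁ r₂ r₃ :=
  (fun k => if k = j then 2 else 1, 1, 1)

/-- The element of `RingR` with `2` at the `j`-th `ℤ₄`-coordinate and `1` elsewhere. -/
def e4 (r₁ r₂ r₃ : ℕ) (j : Fin r₂) : RingR r₁ r₂ r₃ :=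
  (1, fun k => if k = j then 2 else 1, 1)

/-- The element of `RingR` with `2` at the `j`-th `ℤ₂`-coordinate and `1` elsewhere. -/
def e2 (r₁ r₂ r₃ : ℕ) (j : Fin r₃) : RingR r₁ r₂ r₃ :=
  (1, 1, fun k => if k = j then 2 else 1)

/-!
Project onto the coordinate at which `a_j` equals `2`. All other elements of `T` are `1` there,
so that coordinate of the product of a sub-multiset `T' ≤ T` is `2 ^ c`, where `c` is the
multiplicity of `a_j` in `T'`. In `ℤ/2^m`, with `m` the multiplicity of `a_j` in `T`, this is `0`
for `c = m` and nonzero for `c < m`; hence `T'.prod = T.prod` forces `T'` to contain every copy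
of every `a_j`.
-/
lemma ZMod.two_pow_ne_zero_of_lt {n k : ℕ} (hk : k < n) : (2 : ZMod (2 ^ n)) ^ k ≠ 0 := by
  have hcast : (2 : ZMod (2 ^ n)) ^ k = ((2 ^ k : ℕ) : ZMod (2 ^ n)) := by push_cast; rfl
  rw [hcast, Ne, ZMod.natCast_eq_zero_iff, Nat.pow_dvd_pow_iff_le_right one_lt_two]
  omega

lemma ZMod.two_pow_self (n : ℕ) : (2 : ZMod (2 ^ n)) ^ n = 0 := by
  exact_mod_cast ZMod.natCast_self (2 ^ n)

def Multiset.TwoPowSeparated {α : Type*} [CommMonoid α] [DecidableEq α] (t : Multiset α) :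
    Prop :=
  ∀ x ∈ t, ∃ f : α →* ZMod (2 ^ t.count x), f x = 2 ∧ ∀ y ∈ t, y ≠ x → f y = 1

theorem Multiset.TwoPowSeparated.eq_of_le_of_prod_eq {α : Type*} [CommMonoid α]
    [DecidableEq α] {s t : Multiset α} (ht : t.TwoPowSeparated) (hle : s ≤ t)
    (hprod : s.prod = t.prod) : s = t := by
  refine le_antisymm hle (Multiset.le_iff_count.2 fun x => ?_)
  by_cases hx : x ∈ t
  swap
  · simp [Multiset.count_eq_zero.2 hx]
  obtain ⟨f, hfx, hf1⟩ := ht x hx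
  have hf_prod : ∀ u ≤ t, f u.prod = 2 ^ u.count x := fun u hu => by
    rw [← hfx, map_multiset_prod, Multiset.prod_map_eq_pow_single x
      fun y hyx hy => hf1 y (Multiset.mem_of_le hu hy) hyx]
  by_contra hlt
  apply ZMod.two_pow_ne_zero_of_lt (not_le.1 hlt)
  rw [← hf_prod s hle, hprod, hf_prod t le_rfl, ZMod.two_pow_self]

lemma Pi.mulSingle_left_injective {ι M : Type*} [DecidableEq ι] [One M] {x : M} (hx : x ≠ 1) :
    Function.Injective (Pi.mulSingle · x : ι → ι → M) := fun j k h => by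
  by_contra hjk
  exact hx (by simpa [Pi.mulSingle_eq_of_ne hjk] using congrFun h j)

lemma Multiset.count_map_univ_eq_zero {ι α : Type*} [Fintype ι] [DecidableEq α] {f : ι → α}
    {a : α} (h : ∀ i, f i ≠ a) : (Finset.univ.val.map f).count a = 0 :=
  Multiset.count_eq_zero.2 fun hm => by
    obtain ⟨i, -, hi⟩ := Multiset.mem_map.1 hm
    exact h i hi

namespace RingR

variable {r₁ r₂ r₃ : ℕ}

lemma e8_eq_mulSingle (j : Fin r₁) : e8 r₁ r₂ r₃ j = (Pi.mulSingle j 2, 1, 1) := by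
  simp only [e8, Prod.mk.injEq, and_true]
  ext k
  exact (Pi.mulSingle_apply j 2 k).symm

lemma e4_eq_mulSingle (j : Fin r₂) : e4 r₁ r₂ r₃ j = (1, Pi.mulSingle j 2, 1) := by
  simp only [e4, Prod.mk.injEq, and_true, true_and]
  ext k
  exact (Pi.mulSingle_apply j 2 k).symm

lemma e2_eq_mulSingle (j : Fin r₃) : e2 r₁ r₂ r₃ j = (1, 1, Pi.mulSingle j 2) := by
  simp only [e2, Prod.mk.injEq, true_and]
  ext k
  exact (Pi.mulSingle_apply j 2 k).symm

lemma e8_injective : Function.Injective (e8 r₁ r₂ r₃) := fun j k h => by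
  simp only [e8_eq_mulSingle, Prod.mk.injEq, and_true] at h
  exact Pi.mulSingle_left_injective (by decide) h

lemma e4_injective : Function.Injective (e4 r₁ r₂ r₃) := fun j k h => by
  simp only [e4_eq_mulSingle, Prod.mk.injEq, and_true, true_and] at h
  exact Pi.mulSingle_left_injective (by decide) h

lemma e2_injective : Function.Injective (e2 r₁ r₂ r₃) := fun j k h => by
  simp only [e2_eq_mulSingle, Prod.mk.injEq, true_and] at h
  exact Pi.mulSingle_left_injective (by decide) h

lemma e8_ne_e4 (j : Fin r₁) (k : Fin r₂) : e8 r₁ r₂ r₃ j ≠ e4 r₁ r₂ r₃ k := fun h => by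
  rw [e8_eq_mulSingle, e4_eq_mulSingle] at h
  exact absurd (Pi.mulSingle_eq_one_iff.1 (congrArg Prod.fst h)) (by decide)

lemma e8_ne_e2 (j : Fin r₁) (k : Fin r₃) : e8 r₁ r₂ r₃ j ≠ e2 r₁ r₂ r₃ k := fun h => by
  rw [e8_eq_mulSingle, e2_eq_mulSingle] at h
  exact absurd (Pi.mulSingle_eq_one_iff.1 (congrArg Prod.fst h)) (by decide)

lemma e4_ne_e2 (j : Fin r₂) (k : Fin r₃) : e4 r₁ r₂ r₃ j ≠ e2 r₁ r₂ r₃ k := fun h => by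
  rw [e4_eq_mulSingle, e2_eq_mulSingle] at h
  exact absurd (Pi.mulSingle_eq_one_iff.1 (congrArg (·.2.1) h)) (by decide)

def witness (r₁ r₂ r₃ : ℕ) : Multiset (RingR r₁ r₂ r₃) :=
  3 • (Finset.univ.val.map (e8 r₁ r₂ r₃)) + 2 • (Finset.univ.val.map (e4 r₁ r₂ r₃))
    + (Finset.univ.val.map (e2 r₁ r₂ r₃))

lemma mem_witness {x : RingR r₁ r₂ r₃} : x ∈ witness r₁ r₂ r₃ ↔
    (∃ j, e8 r₁ r₂ r₃ j = x) ∨ (∃ j, e4 r₁ r₂ r₃ j = x) ∨ ∃ j, e2 r₁ r₂ r₃ j = x := by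
  simp [witness, Multiset.mem_nsmul, or_assoc]

lemma count_e8_witness (j : Fin r₁) : (witness r₁ r₂ r₃).count (e8 r₁ r₂ r₃ j) = 3 := by
  rw [witness, Multiset.count_add, Multiset.count_add, Multiset.count_nsmul,
    Multiset.count_nsmul, Multiset.count_map_eq_count' _ _ e8_injective, Multiset.count_univ,
    Multiset.count_map_univ_eq_zero fun k => (e8_ne_e4 j k).symm,
    Multiset.count_map_univ_eq_zero fun k => (e8_ne_e2 j k).symm]

lemma count_e4_witness (j : Fin r₂) : (witness r₁ r₂ r₃).count (e4 r₁ r₂ r₃ j) = 2 := by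
  rw [witness, Multiset.count_add, Multiset.count_add, Multiset.count_nsmul,
    Multiset.count_nsmul, Multiset.count_map_eq_count' _ _ e4_injective, Multiset.count_univ,
    Multiset.count_map_univ_eq_zero fun k => e8_ne_e4 k j,
    Multiset.count_map_univ_eq_zero fun k => (e4_ne_e2 j k).symm]

lemma count_e2_witness (j : Fin r₃) : (witness r₁ r₂ r₃).count (e2 r₁ r₂ r₃ j) = 1 := by
  rw [witness, Multiset.count_add, Multiset.count_add, Multiset.count_nsmul,
    Multiset.count_nsmul, Multiset.count_map_eq_count' _ _ e2_injective, Multiset.count_univ,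
    Multiset.count_map_univ_eq_zero fun k => e8_ne_e2 k j,
    Multiset.count_map_univ_eq_zero fun k => e4_ne_e2 k j]

def coord8 (j : Fin r₁) : RingR r₁ r₂ r₃ →* ZMod 8 :=
  (Pi.evalMonoidHom _ j).comp (MonoidHom.fst _ _)

def coord4 (j : Fin r₂) : RingR r₁ r₂ r₃ →* ZMod 4 :=
  (Pi.evalMonoidHom _ j).comp ((MonoidHom.fst _ _).comp (MonoidHom.snd _ _))

def coord2 (j : Fin r₃) : RingR r₁ r₂ r₃ →* ZMod 2 :=
  (Pi.evalMonoidHom _ j).comp ((MonoidHom.snd _ _).comp (MonoidHom.snd _ _))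

@[simp] lemma coord8_apply (j : Fin r₁) (x : RingR r₁ r₂ r₃) : coord8 j x = x.1 j := rfl
@[simp] lemma coord4_apply (j : Fin r₂) (x : RingR r₁ r₂ r₃) : coord4 j x = x.2.1 j := rfl
@[simp] lemma coord2_apply (j : Fin r₃) (x : RingR r₁ r₂ r₃) : coord2 j x = x.2.2 j := rfl

lemma twoPowSeparated_witness : (witness r₁ r₂ r₃).TwoPowSeparated := by
  intro x hx
  rcases mem_witness.1 hx with ⟨j, rfl⟩ | ⟨j, rfl⟩ | ⟨j, rfl⟩
  · rw [count_e8_witness]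
    refine ⟨coord8 j, by simp [e8_eq_mulSingle], fun y hy hyj => ?_⟩
    rcases mem_witness.1 hy with ⟨k, rfl⟩ | ⟨k, rfl⟩ | ⟨k, rfl⟩
    · simp [e8_eq_mulSingle, e8_injective.ne_iff.1 hyj]
    · simp [e4_eq_mulSingle]
    · simp [e2_eq_mulSingle]
  · rw [count_e4_witness]
    refine ⟨coord4 j, by simp [e4_eq_mulSingle], fun y hy hyj => ?_⟩
    rcases mem_witness.1 hy with ⟨k, rfl⟩ | ⟨k, rfl⟩ | ⟨k, rfl⟩
    · simp [e8_eq_mulSingle]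
    · simp [e4_eq_mulSingle, e4_injective.ne_iff.1 hyj]
    · simp [e2_eq_mulSingle]
  · rw [count_e2_witness]
    refine ⟨coord2 j, by simp [e2_eq_mulSingle], fun y hy hyj => ?_⟩
    rcases mem_witness.1 hy with ⟨k, rfl⟩ | ⟨k, rfl⟩ | ⟨k, rfl⟩
    · simp [e8_eq_mulSingle]
    · simp [e4_eq_mulSingle]
    · simp [e2_eq_mulSingle, e2_injective.ne_iff.1 hyj]

end RingR

theorem irreducible_witness_in_Z8Z4Z2_general
    (r₁ r₂ r₃ : ℕ)
    (T : Multiset (RingR r₁ r₂ r₃))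
    (hT : T = 3 • (Finset.univ.val.map (e8 r₁ r₂ r₃))
            + 2 • (Finset.univ.val.map (e4 r₁ r₂ r₃))
            + (Finset.univ.val.map (e2 r₁ r₂ r₃))) :
    ∀ T' < T, T'.prod ≠ T.prod := by
  intro T' hlt hprod
  subst hT
  exact hlt.ne (RingR.twoPowSeparated_witness.eq_of_le_of_prod_eq hlt.le hprod)

theorem irreducible_witness_in_Z8Z4Z2
    (r₁ r₂ r₃ : ℕ) (h : 0 < r₁ + r₂ + r₃)
    (T : Multiset (RingR r₁ r₂ r₃))
    (hT : T = 3 • (Finset.univ.val.map (e8 r₁ r₂ r₃))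
            + 2 • (Finset.univ.val.map (e4 r₁ r₂ r₃))
            + (Finset.univ.val.map (e2 r₁ r₂ r₃))) :
    ∀ T' < T, T'.prod ≠ T.prod :=
  irreducible_witness_in_Z8Z4Z2_general r₁ r₂ r₃ T hT
end

section
/- Let r_1, r_2, r_3 be nonnegative integers, not all zero, and let R = ℤ_8^{r_1} ⊕ ℤ_4^{r_2} ⊕ ℤ_2^{r_3} with multiplicative monoid S_R. Then D(S_R) = 3r_1 + 2r_2 + r_3 + 1. -/
/-!
In `ZMod 8`, `ZMod 4` and `ZMod 2` every unit squares to `1`, so the units are exactly the `x` with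
`x * x = 1`, and they are recognised that way below.

Lower bound: in `ZMod (2 ^ k)` the element `w = 2` (`w = 0` when `k = 1`) has `w ^ j ≠ 0 = w ^ k`
for `j < k`, so `k` copies of it, put into one coordinate of `R` with `1` elsewhere, form a
sequence no proper subsequence of which has the same product. Doing this in every coordinate gives
such a sequence of length `3r₁ + 2r₂ + r₃`.

Upper bound: fix a sequence in `ZMod (2 ^ k)`, `k ≤ 3`, with product `p`. Any `k` non-units
multiply to `0`, so if `p = 0` some set `K` of at most `k` positions already has product `0`, and
all positions outside `K` may be deleted. If `p ≠ 0`, let `K` be the non-unit positions; the units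
fixing `p` form the kernel of at most `k - #K` characters into `ZMod 2`, so deleting positions
outside `K` whose character vectors sum to zero does not change `p`. Over all coordinates of `R`
these budgets add up to `3r₁ + 2r₂ + r₃`, and since `d + 1` vectors in `(ZMod 2) ^ d` always
contain a nonempty zero-sum subfamily, every sequence of length `3r₁ + 2r₂ + r₃ + 1` has a nonempty
subsequence whose deletion preserves the product.
-/

open Finset

section Reduced

universe u

variable {ι : Type*} {M : Type u} [Fintype ι] [CommMonoid M]

def IsProdReduced (x : ι → M) : Prop :=
  ∀ s : Finset ι, s ≠ univ → ∏ i ∈ s, x i ≠ ∏ i, x i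

theorem Multiset.exists_le_map_eq_of_le_map {α β : Type*} {f : α → β} :
    ∀ {t : Multiset α} {s : Multiset β}, s ≤ t.map f → ∃ u ≤ t, u.map f = s := by
  classical
  intro t
  induction t using Multiset.induction_on with
  | empty => intro s hs; exact ⟨0, le_rfl, (Multiset.le_zero.mp (by simpa using hs)).symm⟩
  | cons a t ih =>
    intro s hs
    rw [Multiset.map_cons] at hs
    by_cases ha : f a ∈ s
    · obtain ⟨u, hut, hu⟩ := ih (Multiset.erase_le_iff_le_cons.mpr hs)
      refine ⟨a ::ₘ u, Multiset.cons_le_cons a hut, ?_⟩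
      rw [Multiset.map_cons, hu, Multiset.cons_erase ha]
    · obtain ⟨u, hut, hu⟩ := ih ((Multiset.le_cons_of_notMem ha).mp hs)
      exact ⟨u, hut.trans (Multiset.le_cons_self t a), hu⟩

theorem IsProdReduced.multiset_prod_ne {x : ι → M} (hx : IsProdReduced x) (s : Finset ι)
    {T : Multiset M} (hT : T < s.val.map x) : T.prod ≠ (s.val.map x).prod := by
  classical
  obtain ⟨u, hus, rfl⟩ := Multiset.exists_le_map_eq_of_le_map hT.le
  set t : Finset ι := ⟨u, Multiset.nodup_of_le hus s.nodup⟩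
  have hts : t ⊂ s := val_lt_iff.mp (lt_of_le_of_ne hus (by rintro rfl; exact hT.ne rfl))
  intro h
  refine hx (t ∪ univ \ s) ?_ ?_
  · obtain ⟨i, his, hit⟩ := exists_of_ssubset hts
    intro h'
    have : i ∈ t ∪ univ \ s := by rw [h']; exact mem_univ i
    simp [his, hit] at this
  · rw [prod_union (disjoint_sdiff.mono_left hts.subset), ← prod_sdiff (subset_univ s),
      mul_comm]
    exact congrArg (_ * ·) h

theorem Multiset.exists_lt_prod_eq_of_not_isProdReduced [DecidableEq M] {T : Multiset M}
    (h : ¬ IsProdReduced (fun x : T => (x : M))) : ∃ T' < T, T'.prod = T.prod := by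
  simp only [IsProdReduced, not_forall, not_not] at h
  obtain ⟨s, hs, hprod⟩ := h
  refine ⟨s.val.map (fun x : T => (x : M)), ?_, ?_⟩
  · simpa using Multiset.map_lt_map (f := fun x : T => (x : M))
      (val_lt_iff.mpr (ssubset_univ_iff.mpr hs))
  · rw [← prod_eq_multiset_prod, hprod, prod_eq_multiset_prod, Multiset.map_univ_coe]

theorem davenportM_eq_card_add_one {x : ι → M} (hx : IsProdReduced x)
    (hup : ∀ (κ : Type u) [Fintype κ] (y : κ → M), Fintype.card κ = Fintype.card ι + 1 →
      ¬ IsProdReduced y) :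
    DavenportM M = Fintype.card ι + 1 := by
  classical
  have hmem : Fintype.card ι + 1 ∈ {ℓ : ℕ | 0 < ℓ ∧ ∀ T : Multiset M, Multiset.card T = ℓ →
      ∃ T' : Multiset M, T' < T ∧ T'.prod = T.prod} :=
    ⟨Nat.succ_pos _, fun T hT =>
      T.exists_lt_prod_eq_of_not_isProdReduced (hup T _ (by simpa using hT))⟩
  refine le_antisymm (Nat.sInf_le hmem) (le_csInf ⟨_, hmem⟩ ?_)
  rintro ℓ ⟨-, hℓ⟩
  by_contra! hlt
  obtain ⟨s, -, hs⟩ := exists_subset_card_eq (s := (univ : Finset ι)) (n := ℓ)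
    (by rw [card_univ]; omega)
  obtain ⟨T, hT, hprod⟩ := hℓ (s.val.map x) (by simp [hs])
  exact hx.multiset_prod_ne s hT hprod

end Reduced

section ReducedFamilies

variable {ι M : Type*} [Fintype ι] [CommMonoid M]

theorem IsProdReduced.prod_ne_of_extend {α : Type*} [Fintype α] {y : α → M}
    (hy : IsProdReduced y) {e : α → ι} (he : Function.Injective e) {x : ι → M}
    (hxy : ∀ a, x (e a) = y a) (hx : ∀ i ∉ Set.range e, x i = 1) {s : Finset ι} {a : α}
    (ha : e a ∉ s) : ∏ i ∈ s, x i ≠ ∏ i, x i := by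
  have hprod : ∀ t : Finset ι, ∏ i ∈ t, x i = ∏ b ∈ t.preimage e he.injOn, y b := fun t => by
    rw [← prod_preimage e t he.injOn x fun i _ hi => hx i hi]
    simp only [hxy]
  rw [hprod, hprod, preimage_univ]
  refine hy _ fun h => ha ?_
  have := mem_univ a
  rwa [← h, mem_preimage] at this

theorem isProdReduced_const {M : Type*} [CommMonoidWithZero M] {w : M} {k : ℕ}
    (hk : w ^ k ≠ 0) (hk' : w ^ (k + 1) = 0) : IsProdReduced fun _ : Fin (k + 1) => w := by
  intro s hs
  have hcard : #s ≤ k := by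
    have := card_lt_card (ssubset_univ_iff.mpr hs)
    rw [card_univ, Fintype.card_fin] at this
    omega
  rw [prod_const, prod_const, card_univ, Fintype.card_fin, hk']
  exact fun h => hk (pow_eq_zero_of_le hcard h)

theorem IsProdReduced.sumElim {κ N : Type*} [Fintype κ] [CommMonoid N] {x : ι → M}
    {y : κ → N} (hx : IsProdReduced x) (hy : IsProdReduced y) :
    IsProdReduced (Sum.elim (fun i => (x i, (1 : N))) fun k => ((1 : M), y k)) := by
  intro s hs h
  obtain ⟨j, hj⟩ := exists_of_ssubset (ssubset_univ_iff.mpr hs)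
  rcases j with i | k
  · refine hx.prod_ne_of_extend Sum.inl_injective (fun _ => rfl) ?_ hj.2
      (by simpa only [Prod.fst_prod] using congrArg Prod.fst h)
    rintro (_ | _) hk
    · exact absurd ⟨_, rfl⟩ hk
    · rfl
  · refine hy.prod_ne_of_extend Sum.inr_injective (fun _ => rfl) ?_ hj.2
      (by simpa only [Prod.snd_prod] using congrArg Prod.snd h)
    rintro (_ | _) hk
    · rfl
    · exact absurd ⟨_, rfl⟩ hk

theorem IsProdReduced.sigma_mulSingle {κ : Type*} [Fintype κ] [DecidableEq κ] {ι : κ → Type*}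
    [∀ k, Fintype (ι k)] {M : κ → Type*} [∀ k, CommMonoid (M k)] {x : ∀ k, ι k → M k}
    (hx : ∀ k, IsProdReduced (x k)) :
    IsProdReduced fun j : (k : κ) × ι k => Pi.mulSingle j.1 (x j.1 j.2) := by
  intro s hs h
  obtain ⟨⟨k, i⟩, hj⟩ := exists_of_ssubset (ssubset_univ_iff.mpr hs)
  refine (hx k).prod_ne_of_extend sigma_mk_injective
    (x := fun j => Pi.mulSingle j.1 (x j.1 j.2) k) (fun _ => Pi.mulSingle_eq_same _ _) ?_ hj.2
    (by simpa only [prod_apply] using congrFun h k)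
  rintro ⟨k', i'⟩ hk
  refine Pi.mulSingle_eq_of_ne ?_ _
  rintro rfl
  exact hk ⟨i', rfl⟩

end ReducedFamilies

section ParityCertificate

variable {ι M : Type*} [Fintype ι] [DecidableEq ι]

theorem exists_nonempty_sum_eq_zero {σ : Type*} [Fintype σ] (F : Finset ι)
    (w : ι → σ → ZMod 2) (h : Fintype.card σ < #F) :
    ∃ Δ ⊆ F, Δ.Nonempty ∧ ∑ i ∈ Δ, w i = 0 := by
  classical
  have hcard : #(univ : Finset (σ → ZMod 2)) < #F.powerset := by
    rw [card_univ, Fintype.card_fun, ZMod.card, card_powerset]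
    exact Nat.pow_lt_pow_right one_lt_two h
  obtain ⟨A, hA, B, hB, hAB, hsum⟩ := exists_ne_map_eq_of_card_lt_of_maps_to hcard
    (f := fun A => ∑ i ∈ A, w i) fun _ _ => mem_univ _
  rw [mem_powerset] at hA hB
  refine ⟨symmDiff A B, symmDiff_subset_union.trans (union_subset hA hB),
    symmDiff_nonempty.mpr hAB, ?_⟩
  calc ∑ i ∈ symmDiff A B, w i
        = ∑ i ∈ symmDiff A B, w i + (∑ i ∈ A ∩ B, w i + ∑ i ∈ A ∩ B, w i) := by
        rw [ZModModule.add_self, add_zero]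
    _ = ∑ i ∈ A ∪ B, w i + ∑ i ∈ A ∩ B, w i := by
        rw [← add_assoc, symmDiff_eq_sup_sdiff_inf, sup_eq_union, inf_eq_inter,
          sum_sdiff inter_subset_union]
    _ = 0 := by rw [sum_union_inter, hsum, ZModModule.add_self]

variable [CommMonoid M]

def HasParityCertificate (a : ι → M) (c : ℕ) : Prop :=
  ∃ (K : Finset ι) (σ : Type) (_ : Fintype σ) (χ : ι → σ → ZMod 2),
    #K + Fintype.card σ ≤ c ∧
    ∀ Δ : Finset ι, Disjoint Δ K → ∑ i ∈ Δ, χ i = 0 → ∏ i ∈ Δᶜ, a i = ∏ i, a i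

theorem HasParityCertificate.mono {a : ι → M} {c c' : ℕ} (h : HasParityCertificate a c)
    (hc : c ≤ c') : HasParityCertificate a c' :=
  let ⟨K, σ, _, χ, hcard, hχ⟩ := h
  ⟨K, σ, _, χ, hcard.trans hc, hχ⟩

theorem HasParityCertificate.not_isProdReduced {a : ι → M} {c : ℕ}
    (h : HasParityCertificate a c) (hc : c < Fintype.card ι) : ¬ IsProdReduced a := by
  obtain ⟨K, σ, _, χ, hcard, hχ⟩ := h
  obtain ⟨Δ, hΔK, hΔ, hsum⟩ := exists_nonempty_sum_eq_zero Kᶜ χ (by rw [card_compl]; omega)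
  refine fun hred => hred Δᶜ (compl_ne_univ_iff_nonempty Δ |>.mpr hΔ) (hχ Δ ?_ hsum)
  exact subset_compl_iff_disjoint_right.mp hΔK

theorem HasParityCertificate.prodMk {N : Type*} [CommMonoid N] {a : ι → M × N} {c₁ c₂ : ℕ}
    (h₁ : HasParityCertificate (fun i => (a i).1) c₁)
    (h₂ : HasParityCertificate (fun i => (a i).2) c₂) : HasParityCertificate a (c₁ + c₂) := by
  obtain ⟨K₁, σ₁, _, χ₁, hcard₁, hχ₁⟩ := h₁
  obtain ⟨K₂, σ₂, _, χ₂, hcard₂, hχ₂⟩ := h₂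
  refine ⟨K₁ ∪ K₂, σ₁ ⊕ σ₂, inferInstance, fun i => Sum.elim (χ₁ i) (χ₂ i), ?_, ?_⟩
  · have := card_union_le K₁ K₂
    rw [Fintype.card_sum]
    omega
  · intro Δ hΔ hsum
    rw [disjoint_union_right] at hΔ
    have hsum₁ : ∑ i ∈ Δ, χ₁ i = 0 := funext fun s => by
      simpa [Finset.sum_apply] using congrFun hsum (Sum.inl s)
    have hsum₂ : ∑ i ∈ Δ, χ₂ i = 0 := funext fun s => by
      simpa [Finset.sum_apply] using congrFun hsum (Sum.inr s)
    ext
    · simpa only [Prod.fst_prod] using hχ₁ Δ hΔ.1 hsum₁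
    · simpa only [Prod.snd_prod] using hχ₂ Δ hΔ.2 hsum₂

theorem HasParityCertificate.pi {κ : Type} [Fintype κ] {M : κ → Type*}
    [∀ k, CommMonoid (M k)] {a : ι → ∀ k, M k} {c : κ → ℕ}
    (h : ∀ k, HasParityCertificate (fun i => a i k) (c k)) :
    HasParityCertificate a (∑ k, c k) := by
  choose K σ _ χ hcard hχ using h
  refine ⟨univ.biUnion K, (k : κ) × σ k, inferInstance,
    fun i (s : (k : κ) × σ k) => χ s.1 i s.2, ?_, ?_⟩
  · calc #(univ.biUnion K) + Fintype.card ((k : κ) × σ k)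
        ≤ ∑ k, #(K k) + ∑ k, Fintype.card (σ k) := by
          rw [Fintype.card_sigma]
          exact Nat.add_le_add_right card_biUnion_le _
      _ ≤ ∑ k, c k := by
          rw [← sum_add_distrib]
          exact sum_le_sum fun k _ => hcard k
  · intro Δ hΔ hsum
    ext k
    rw [prod_apply, prod_apply]
    refine hχ k Δ ((disjoint_biUnion_right _ _ _).mp hΔ k (mem_univ k)) (funext fun s => ?_)
    simpa [Finset.sum_apply] using congrFun hsum ⟨k, s⟩

end ParityCertificate

section Involutions

variable {ι M : Type*}

section CommMonoid

variable [CommMonoid M] {a : ι → M}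

theorem Finset.prod_mul_self_eq_one {s : Finset ι} (h : ∀ i ∈ s, a i * a i = 1) :
    (∏ i ∈ s, a i) * ∏ i ∈ s, a i = 1 := by
  rw [← prod_mul_distrib]
  exact prod_eq_one h

theorem map_prod_of_mul_self_eq_one {A : Type*} [AddCancelCommMonoid A] (χ : M → A)
    (hχ : ∀ x y, x * x = 1 → y * y = 1 → χ (x * y) = χ x + χ y) {s : Finset ι}
    (hs : ∀ i ∈ s, a i * a i = 1) : χ (∏ i ∈ s, a i) = ∑ i ∈ s, χ (a i) := by
  classical
  induction s using Finset.induction_on with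
  | empty => simpa using hχ 1 1 (mul_one 1) (mul_one 1)
  | insert i s hi ih =>
    have hs' : ∀ j ∈ s, a j * a j = 1 := fun j hj => hs j (mem_insert_of_mem hj)
    rw [prod_insert hi, sum_insert hi, hχ _ _ (hs i (mem_insert_self i s))
      (prod_mul_self_eq_one hs'), ih hs']

variable [Fintype ι] [DecidableEq M]

theorem filter_mul_self_ne_one_eq_empty (hdiv : ∀ x y : M, x * y * (x * y) = 1 → x * x = 1)
    (h : (∏ i, a i) * ∏ i, a i = 1) : univ.filter (fun i => a i * a i ≠ 1) = ∅ := by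
  classical
  exact filter_eq_empty_iff.mpr fun i _ =>
    not_not.mpr (hdiv (a i) _ (by rwa [mul_prod_erase univ a (mem_univ i)]))

variable [DecidableEq ι]

theorem HasParityCertificate.of_character {σ : Type} [Fintype σ] (χ : M → σ → ZMod 2)
    (hχ : ∀ x y, x * x = 1 → y * y = 1 → χ (x * y) = χ x + χ y)
    (hfix : ∀ u, u * u = 1 → χ u = 0 → (∏ i, a i) * u = ∏ i, a i) :
    HasParityCertificate a (#(univ.filter fun i => a i * a i ≠ 1) + Fintype.card σ) := by
  refine ⟨_, σ, inferInstance, fun i => χ (a i), le_rfl, fun Δ hΔ hsum => ?_⟩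
  have hinv : ∀ i ∈ Δ, a i * a i = 1 := fun i hi => by
    by_contra h
    exact disjoint_left.mp hΔ hi (by simpa using h)
  have hu := prod_mul_self_eq_one hinv
  calc ∏ i ∈ Δᶜ, a i = (∏ i ∈ Δᶜ, a i) * ((∏ i ∈ Δ, a i) * ∏ i ∈ Δ, a i) := by
        rw [hu, mul_one]
    _ = (∏ i, a i) * ∏ i ∈ Δ, a i := by rw [← mul_assoc, prod_compl_mul_prod]
    _ = ∏ i, a i := hfix _ hu ((map_prod_of_mul_self_eq_one χ hχ hinv).trans hsum)

end CommMonoid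

variable [CommMonoidWithZero M] {a : ι → M} {k : ℕ}

theorem prod_eq_zero_of_card_eq (hnil : ∀ x : Fin k → M, (∀ j, x j * x j ≠ 1) → ∏ j, x j = 0)
    {K : Finset ι} (hK : #K = k) (hKa : ∀ i ∈ K, a i * a i ≠ 1) : ∏ i ∈ K, a i = 0 := by
  rw [← prod_coe_sort K, ← (K.equivFin.trans (finCongr hK)).symm.prod_comp]
  exact hnil _ fun j => hKa _ (coe_mem _)

variable [Fintype ι] [DecidableEq M]

theorem card_filter_mul_self_ne_one_lt
    (hnil : ∀ x : Fin k → M, (∀ j, x j * x j ≠ 1) → ∏ j, x j = 0) (h : ∏ i, a i ≠ 0) :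
    #(univ.filter fun i => a i * a i ≠ 1) < k := by
  by_contra! hN
  obtain ⟨K, hKN, hK⟩ := exists_subset_card_eq hN
  have hK0 := prod_eq_zero_of_card_eq hnil hK fun i hi => (mem_filter.mp (hKN hi)).2
  exact h (zero_dvd_iff.mp (hK0 ▸ prod_dvd_prod_of_subset K univ a (subset_univ K)))

variable [DecidableEq ι]

theorem exists_card_le_prod_eq_zero
    (hnil : ∀ x : Fin k → M, (∀ j, x j * x j ≠ 1) → ∏ j, x j = 0) (h : ∏ i, a i = 0) :
    ∃ K : Finset ι, #K ≤ k ∧ ∏ i ∈ K, a i = 0 := by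
  set N := univ.filter fun i => a i * a i ≠ 1
  by_cases hN : k ≤ #N
  · obtain ⟨K, hKN, hK⟩ := exists_subset_card_eq hN
    exact ⟨K, hK.le, prod_eq_zero_of_card_eq hnil hK fun i hi => (mem_filter.mp (hKN hi)).2⟩
  · refine ⟨N, by omega, ?_⟩
    have hu := prod_mul_self_eq_one (s := Nᶜ) (a := a) fun i hi => by simpa [N] using hi
    calc ∏ i ∈ N, a i = (∏ i ∈ N, a i) * ((∏ i ∈ Nᶜ, a i) * ∏ i ∈ Nᶜ, a i) := by
          rw [hu, mul_one]
      _ = (∏ i, a i) * ∏ i ∈ Nᶜ, a i := by rw [← mul_assoc, prod_mul_prod_compl]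
      _ = 0 := by rw [h, zero_mul]

theorem HasParityCertificate.of_prod_eq_zero
    (hnil : ∀ x : Fin k → M, (∀ j, x j * x j ≠ 1) → ∏ j, x j = 0) (h : ∏ i, a i = 0) :
    HasParityCertificate a k := by
  obtain ⟨K, hK, hK0⟩ := exists_card_le_prod_eq_zero hnil h
  refine ⟨K, Empty, inferInstance, 0, by simpa using hK, fun Δ hΔ _ => ?_⟩
  rw [h]
  exact zero_dvd_iff.mp
    (hK0 ▸ prod_dvd_prod_of_subset K Δᶜ a (subset_compl_iff_disjoint_left.mpr hΔ))

/-- `χ` serves when the product is an involution, `ψ` when it is a nonzero non-involution, in which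
case at most `k - 1` of the factors are non-involutions. -/
theorem hasParityCertificate_of_characters {σ τ : Type} [Fintype σ] [Fintype τ]
    (hnil : ∀ x : Fin k → M, (∀ j, x j * x j ≠ 1) → ∏ j, x j = 0)
    (hdiv : ∀ x y : M, x * y * (x * y) = 1 → x * x = 1)
    (χ : M → σ → ZMod 2) (hχ : ∀ x y, x * x = 1 → y * y = 1 → χ (x * y) = χ x + χ y)
    (hχ_ker : ∀ u, u * u = 1 → χ u = 0 → u = 1) (hσ : Fintype.card σ ≤ k)
    (ψ : M → τ → ZMod 2) (hψ : ∀ x y, x * x = 1 → y * y = 1 → ψ (x * y) = ψ x + ψ y)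
    (hψ_ker : ∀ u, u * u = 1 → ψ u = 0 → ∀ p, p ≠ 0 → p * p ≠ 1 → p * u = p)
    (hτ : Fintype.card τ ≤ 1) (a : ι → M) : HasParityCertificate a k := by
  by_cases h0 : ∏ i, a i = 0
  · exact .of_prod_eq_zero hnil h0
  by_cases h1 : (∏ i, a i) * ∏ i, a i = 1
  · refine (HasParityCertificate.of_character χ hχ fun u hu hχu => ?_).mono ?_
    · rw [hχ_ker u hu hχu, mul_one]
    · rwa [filter_mul_self_ne_one_eq_empty hdiv h1, card_empty, zero_add]
  · refine (HasParityCertificate.of_character ψ hψ fun u hu hψu => ?_).mono ?_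
    · exact hψ_ker u hu hψu _ h0 h1
    · have := card_filter_mul_self_ne_one_lt hnil h0
      omega

end Involutions

section ZModTwoPow

variable {ι : Type*} [Fintype ι] [DecidableEq ι]

/-- The two characters of `(ZMod 8)ˣ ≅ C₂ × C₂`. The kernel of the first one, `{1, 5}`, is the
stabiliser of every nonzero non-unit. -/
def zmod8Characters (x : ZMod 8) : Fin 2 → ZMod 2 :=
  ![if x = 3 ∨ x = 7 then 1 else 0, if x = 3 ∨ x = 5 then 1 else 0]

theorem hasParityCertificate_zmod8 (a : ι → ZMod 8) : HasParityCertificate a 3 := by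
  have hnil : ∀ p q r : ZMod 8, p * p ≠ 1 → q * q ≠ 1 → r * r ≠ 1 → p * q * r = 0 := by decide
  refine hasParityCertificate_of_characters
    (fun x hx => by rw [Fin.prod_univ_three]; exact hnil _ _ _ (hx 0) (hx 1) (hx 2))
    (by decide) zmod8Characters (by decide) (by decide) (by simp)
    (fun x (_ : Unit) => zmod8Characters x 0) (by decide) (by decide) (by simp) a

theorem hasParityCertificate_zmod4 (a : ι → ZMod 4) : HasParityCertificate a 2 := by
  have hnil : ∀ p q : ZMod 4, p * p ≠ 1 → q * q ≠ 1 → p * q = 0 := by decide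
  refine hasParityCertificate_of_characters
    (fun x hx => by rw [Fin.prod_univ_two]; exact hnil _ _ (hx 0) (hx 1))
    (by decide) (fun x (_ : Unit) => if x = 3 then 1 else 0) (by decide) (by decide) (by simp)
    (0 : ZMod 4 → Empty → ZMod 2) (by decide) (by decide) (by simp) a

theorem hasParityCertificate_zmod2 (a : ι → ZMod 2) : HasParityCertificate a 1 := by
  refine hasParityCertificate_of_characters
    (fun x hx => by
      rw [Fin.prod_univ_one]
      exact (by decide : ∀ p : ZMod 2, p * p ≠ 1 → p = 0) _ (hx 0))
    (by decide) (0 : ZMod 2 → Empty → ZMod 2) (by decide) (by decide) (by simp)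
    (0 : ZMod 2 → Empty → ZMod 2) (by decide) (by decide) (by simp) a

end ZModTwoPow

section RingR

variable (r₁ r₂ r₃ : ℕ)

theorem exists_isProdReduced_ringR : ∃ (ι : Type) (_ : Fintype ι) (x : ι → RingR r₁ r₂ r₃),
    IsProdReduced x ∧ Fintype.card ι = 3 * r₁ + 2 * r₂ + r₃ := by
  refine ⟨_, inferInstance, _, (IsProdReduced.sigma_mulSingle fun _ : Fin r₁ =>
      isProdReduced_const (w := (2 : ZMod 8)) (k := 2) (by decide) (by decide)).sumElim
    ((IsProdReduced.sigma_mulSingle fun _ : Fin r₂ =>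
      isProdReduced_const (w := (2 : ZMod 4)) (k := 1) (by decide) (by decide)).sumElim
    (IsProdReduced.sigma_mulSingle fun _ : Fin r₃ =>
      isProdReduced_const (w := (0 : ZMod 2)) (k := 0) (by decide) (by decide))), ?_⟩
  simp only [Fintype.card_sum, Fintype.card_sigma, Fintype.card_fin, sum_const, card_univ,
    smul_eq_mul]
  ring

theorem hasParityCertificate_ringR {ι : Type*} [Fintype ι] [DecidableEq ι]
    (a : ι → RingR r₁ r₂ r₃) : HasParityCertificate a (3 * r₁ + 2 * r₂ + r₃) := by
  have := HasParityCertificate.prodMk (.pi fun _ => hasParityCertificate_zmod8 _)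
    (.prodMk (.pi fun _ => hasParityCertificate_zmod4 _)
      (.pi fun _ => hasParityCertificate_zmod2 _))
    (a := a)
  simpa [sum_const, mul_comm, add_assoc] using this

end RingR

theorem davenport_of_Z8Z4Z2_general
    (r₁ r₂ r₃ : ℕ) :
    DavenportM (RingR r₁ r₂ r₃) = 3 * r₁ + 2 * r₂ + r₃ + 1 := by
  classical
  obtain ⟨ι, _, x, hx, hcard⟩ := exists_isProdReduced_ringR r₁ r₂ r₃
  rw [← hcard]
  exact davenportM_eq_card_add_one hx fun κ _ y hκ =>
    (hasParityCertificate_ringR r₁ r₂ r₃ y).not_isProdReduced (by omega)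

theorem davenport_of_Z8Z4Z2
    (r₁ r₂ r₃ : ℕ) (h : 0 < r₁ + r₂ + r₃) :
    DavenportM (RingR r₁ r₂ r₃) = 3 * r₁ + 2 * r₂ + r₃ + 1 :=
  davenport_of_Z8Z4Z2_general r₁ r₂ r₃
end

section
/- Let S be a finite commutative monoid, let T be a multiset of elements of S, and let V be a sub-multiset of T of minimal cardinality subject to the condition that the product of V and the product of T are Green's H-equivalent (each divides the other in S). Then for any enumeration a_1, …, a_t of V, the chain of partial products is strictly decreasing in Green's preorder: for each i ∈ [0, t−1], the partial product a_1⋯a_i divides a_1⋯a_{i+1} in S, but a_1⋯a_{i+1} does not divide a_1⋯a_i (where the empty product is the identity). -/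
/-!
Write `p_i` for the partial products. Always `p_i ∣ p_{i+1} = p_i * a_{i+1}`. If moreover
`p_{i+1} ∣ p_i`, then multiplying by the product of the remaining factors shows that the product
of `V` divides the product of `V` with `a_{i+1}` removed; the latter also divides the former, so
removing `a_{i+1}` keeps the product H-equivalent to that of `T`, contradicting minimality.
-/

theorem List.prod_dvd_prod_eraseIdx_of_prod_take_succ_dvd {M : Type*} [CommMonoid M]
    {L : List M} {i : ℕ} (h : (L.take (i + 1)).prod ∣ (L.take i).prod) :
    L.prod ∣ (L.eraseIdx i).prod := by
  rw [eraseIdx_eq_take_drop_succ, prod_append, ← prod_take_mul_prod_drop L (i + 1)]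
  exact mul_dvd_mul_right h _

theorem green_chain_of_minimal_H_equivalent_submultiset_general
    (S : Type*) [CommMonoid S]
    (T V : Multiset S) (hVT : V ≤ T)
    (hH : V.prod ∣ T.prod ∧ T.prod ∣ V.prod)
    (hmin : ∀ V' : Multiset S, V' ≤ T → (V'.prod ∣ T.prod ∧ T.prod ∣ V'.prod) →
      Multiset.card V ≤ Multiset.card V')
    (L : List S) (hL : (L : Multiset S) = V) :
    ∀ i < L.length,
      (L.take i).prod ∣ (L.take (i + 1)).prod
        ∧ ¬ (L.take (i + 1)).prod ∣ (L.take i).prod := by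
  intro i hi
  refine ⟨L.prod_take_succ i hi ▸ dvd_mul_right _ _, fun hdvd => ?_⟩
  subst hL
  have hle : ((L.eraseIdx i : List S) : Multiset S) ≤ L :=
    Multiset.coe_le.2 (L.eraseIdx_sublist i).subperm
  have hprod : (L : Multiset S).prod ∣ (L.eraseIdx i : Multiset S).prod := by
    simpa using L.prod_dvd_prod_eraseIdx_of_prod_take_succ_dvd hdvd
  have hcard := hmin _ (hle.trans hVT)
    ⟨(Multiset.prod_dvd_prod_of_le hle).trans hH.1, hH.2.trans hprod⟩
  simp only [Multiset.coe_card, List.length_eraseIdx_of_lt hi] at hcard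
  omega

theorem green_chain_of_minimal_H_equivalent_submultiset
    (S : Type*) [CommMonoid S] [Finite S]
    (T V : Multiset S) (hVT : V ≤ T)
    (hH : V.prod ∣ T.prod ∧ T.prod ∣ V.prod)
    (hmin : ∀ V' : Multiset S, V' ≤ T → (V'.prod ∣ T.prod ∧ T.prod ∣ V'.prod) →
      Multiset.card V ≤ Multiset.card V')
    (L : List S) (hL : (L : Multiset S) = V) :
    ∀ i < L.length,
      (L.take i).prod ∣ (L.take (i + 1)).prod
        ∧ ¬ (L.take (i + 1)).prod ∣ (L.take i).prod :=
  green_chain_of_minimal_H_equivalent_submultiset_general S T V hVT hH hmin L hL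
end

section
/- Let r ≥ 1 and n_1, …, n_r > 1 be integers and let R = ℤ_{n_1} ⊕ ⋯ ⊕ ℤ_{n_r} with multiplicative monoid S_R. Let a_1, …, a_t ∈ R be such that the partial products form a strictly decreasing chain in Green's preorder: for each i ∈ [0, t−1], a_1⋯a_i divides a_1⋯a_{i+1} in S_R but not conversely (the empty product being 1). For i ∈ [0, t], let K_i = St(a_1⋯a_i) = {u ∈ Rˣ : u·(a_1⋯a_i) = a_1⋯a_i}. Then the number of indices i ∈ [0, t−1] with K_i = K_{i+1} is at most δ = #{j ∈ [1,r] : 2 ∣ n_j}; equivalently, there is a subset M ⊆ [0, t−1] with |M| ≥ t − δ such that K_i ⊊ K_{i+1} for each i ∈ M. -/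
/-!
The stabilizer of `c ∈ ℤ_n` in `ℤ_nˣ` is the kernel of the surjection `ℤ_nˣ → ℤ_mˣ`, where `m`
is the additive order of `c`; hence it has index `φ m`. If `c ∣ c'` properly and the two
stabilizers agree, the orders satisfy `m' ∣ m`, `m' ≠ m` and `φ m' = φ m`, which forces `m = 2 m'`
with `m'` odd.

In `R`, the stabilizers of the partial products agree componentwise whenever `K_i = K_{i+1}`, and
in a component `j` where `a_1⋯a_{i+1}` does not divide `a_1⋯a_i` the additive order drops from even
to odd. Along the chain these orders only decrease under divisibility, so such a drop happens at
most once in each component, and only in components with `n_j` even.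
-/

open scoped Nat

theorem Nat.eq_two_mul_and_odd_of_totient_eq {m k : ℕ} (hdvd : m ∣ k) (hne : m ≠ k) (hk : k ≠ 0)
    (hφ : φ k = φ m) : k = 2 * m ∧ Odd m := by
  obtain ⟨c, rfl⟩ := hdvd
  have hm : 0 < m := Nat.pos_of_ne_zero (left_ne_zero_of_mul hk)
  have hc : 0 < c := Nat.pos_of_ne_zero (right_ne_zero_of_mul hk)
  have key := totient_gcd_mul_totient_mul m c
  -- `φ (m * c) = φ m` turns this into `φ (gcd m c) = φ c * gcd m c`, so `φ c = gcd m c = 1`.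
  rw [hφ, mul_comm (φ (m.gcd c)), mul_assoc] at key
  have key' : φ (m.gcd c) = φ c * m.gcd c := Nat.mul_left_cancel (totient_pos.mpr hm) key
  have hg := Nat.gcd_pos_of_pos_right m hc
  have hφc : φ c = 1 := le_antisymm
    (Nat.le_of_mul_le_mul_right (by rw [one_mul, ← key']; exact totient_le _) hg)
    (totient_pos.mpr hc)
  have hgcd : m.gcd c = 1 := by
    by_contra h
    rw [hφc, one_mul] at key'
    exact (totient_lt _ (by omega)).ne key'
  rcases totient_eq_one_iff.mp hφc with rfl | rfl
  · exact absurd (mul_one m).symm hne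
  · exact ⟨mul_comm m 2, Nat.coprime_two_right.mp hgcd⟩

theorem addOrderOf_dvd_addOrderOf_of_dvd {R : Type*} [NonUnitalSemiring R] {a b : R} (h : a ∣ b) :
    addOrderOf b ∣ addOrderOf a := by
  obtain ⟨c, rfl⟩ := h
  exact addOrderOf_dvd_of_nsmul_eq_zero <| by
    rw [← smul_mul_assoc, addOrderOf_nsmul_eq_zero, zero_mul]

namespace ZMod
variable {n : ℕ} [NeZero n]

theorem addOrderOf_dvd_modulus (a : ZMod n) : addOrderOf a ∣ n := by
  simpa using addOrderOf_dvd_card (x := a)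

theorem mul_eq_zero_iff_addOrderOf_dvd_val (x a : ZMod n) :
    x * a = 0 ↔ addOrderOf a ∣ x.val := by
  rw [addOrderOf_dvd_iff_nsmul_eq_zero, nsmul_eq_mul, natCast_zmod_val]

theorem stabilizer_units_eq_ker (a : ZMod n) :
    MulAction.stabilizer (ZMod n)ˣ a = (unitsMap (addOrderOf_dvd_modulus a)).ker := by
  have hdvd := addOrderOf_dvd_modulus a
  ext u
  calc u ∈ MulAction.stabilizer (ZMod n)ˣ a ↔ ((u : ZMod n) - 1) * a = 0 := by
        rw [MulAction.mem_stabilizer_iff, Units.smul_def, smul_eq_mul, sub_one_mul, sub_eq_zero]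
    _ ↔ (cast ((u : ZMod n) - 1) : ZMod (addOrderOf a)) = 0 := by
        rw [mul_eq_zero_iff_addOrderOf_dvd_val, cast_eq_val, natCast_eq_zero_iff]
    _ ↔ u ∈ (unitsMap hdvd).ker := by
        rw [cast_sub hdvd, cast_one hdvd, sub_eq_zero, MonoidHom.mem_ker, Units.ext_iff,
          unitsMap_val, Units.val_one]

theorem totient_addOrderOf_eq_of_stabilizer_eq {a b : ZMod n}
    (h : MulAction.stabilizer (ZMod n)ˣ a = MulAction.stabilizer (ZMod n)ˣ b) :
    φ (addOrderOf a) = φ (addOrderOf b) := by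
  have index_eq (c : ZMod n) : (MulAction.stabilizer (ZMod n)ˣ c).index = φ (addOrderOf c) := by
    have : NeZero (addOrderOf c) := ⟨(addOrderOf_pos c).ne'⟩
    rw [stabilizer_units_eq_ker, Subgroup.index_ker, MonoidHom.range_eq_top.mpr
      (unitsMap_surjective _), Subgroup.card_top, Nat.card_eq_fintype_card, card_units_eq_totient]
  rw [← index_eq, ← index_eq, h]

theorem dvd_of_dvd_of_addOrderOf_eq {a b : ZMod n} (hab : a ∣ b)
    (h : addOrderOf a = addOrderOf b) : b ∣ a := by
  have hle : AddSubgroup.zmultiples b ≤ AddSubgroup.zmultiples a := by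
    obtain ⟨c, rfl⟩ := hab
    rw [AddSubgroup.zmultiples_le, mul_comm, ← natCast_zmod_val c, ← nsmul_eq_mul]
    exact AddSubgroup.nsmul_mem_zmultiples a c.val
  have heq := AddSubgroup.eq_of_le_of_card_ge hle <| by
    rw [Nat.card_zmultiples, Nat.card_zmultiples, h]
  obtain ⟨k, hk⟩ := AddSubgroup.mem_zmultiples_iff.mp (heq ▸ AddSubgroup.mem_zmultiples a)
  exact ⟨k, by rw [← hk, zsmul_eq_mul, mul_comm]⟩

theorem even_addOrderOf_and_odd_of_stabilizer_eq {a b : ZMod n} (hab : a ∣ b) (hba : ¬ b ∣ a)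
    (h : MulAction.stabilizer (ZMod n)ˣ a = MulAction.stabilizer (ZMod n)ˣ b) :
    Even (addOrderOf a) ∧ Odd (addOrderOf b) := by
  obtain ⟨hdouble, hodd⟩ := Nat.eq_two_mul_and_odd_of_totient_eq
    (addOrderOf_dvd_addOrderOf_of_dvd hab)
    (fun heq => hba (dvd_of_dvd_of_addOrderOf_eq hab heq.symm)) (addOrderOf_pos a).ne'
    (totient_addOrderOf_eq_of_stabilizer_eq h)
  exact ⟨hdouble ▸ even_two_mul _, hodd⟩

end ZMod

namespace Pi
variable {ι : Type*} {M : ι → Type*} [∀ i, Monoid (M i)]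

theorem exists_not_dvd_apply_of_not_dvd {a b : ∀ i, M i} (h : ¬ a ∣ b) : ∃ i, ¬ a i ∣ b i := by
  by_contra! hall
  choose c hc using hall
  exact h ⟨c, funext hc⟩

variable [DecidableEq ι]

theorem units_map_mulSingle_mem_stabilizer_iff {i : ι} (v : (M i)ˣ) (a : ∀ i, M i) :
    Units.map (MonoidHom.mulSingle M i) v ∈ MulAction.stabilizer (∀ i, M i)ˣ a ↔
      v ∈ MulAction.stabilizer (M i)ˣ (a i) := by
  simp only [MulAction.mem_stabilizer_iff, Units.smul_def, smul_eq_mul, Units.coe_map,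
    MonoidHom.mulSingle_apply, funext_iff, Pi.mul_apply]
  refine ⟨fun h => by simpa using h i, fun h j => ?_⟩
  obtain rfl | hj := eq_or_ne j i
  · simpa using h
  · simp [Pi.mulSingle_eq_of_ne hj]

theorem stabilizer_units_apply_eq {a b : ∀ i, M i}
    (h : MulAction.stabilizer (∀ i, M i)ˣ a = MulAction.stabilizer (∀ i, M i)ˣ b) (i : ι) :
    MulAction.stabilizer (M i)ˣ (a i) = MulAction.stabilizer (M i)ˣ (b i) := by
  ext v
  rw [← units_map_mulSingle_mem_stabilizer_iff, ← units_map_mulSingle_mem_stabilizer_iff, h]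

end Pi

theorem List.prod_take_dvd_prod_take {M : Type*} [CommMonoid M] (L : List M) {k k' : ℕ}
    (h : k ≤ k') : (L.take k).prod ∣ (L.take k').prod := by
  rw [← List.prod_take_mul_prod_drop (L.take k') k, List.take_take, min_eq_left h]
  exact dvd_mul_right _ _

theorem ncard_le_card_of_even_odd_succ {ι : Type*} (m : ℕ → ι → ℕ)
    (hm : ∀ j k k', k ≤ k' → m k' j ∣ m k j) (S : Set ℕ) (T : Finset ι)
    (hS : ∀ i ∈ S, ∃ j ∈ T, Even (m i j) ∧ Odd (m (i + 1) j)) : S.ncard ≤ T.card := by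
  choose F hFT hF using hS
  have hne_of_lt {i i'} (hi : i ∈ S) (hi' : i' ∈ S) (hlt : i < i') : F i hi ≠ F i' hi' :=
    fun heq =>
      Nat.not_even_iff_odd.mpr ((hF i hi).2.of_dvd_nat (heq ▸ hm _ _ _ hlt)) (hF i' hi').1
  rw [← Nat.card_coe_set_eq, ← Nat.card_eq_finsetCard]
  refine Nat.card_le_card_of_injective (fun i => ⟨F i i.2, hFT i i.2⟩) fun i i' heq => ?_
  by_contra hne
  rcases lt_or_gt_of_ne (Subtype.coe_ne_coe.mpr hne) with h | h
  · exact hne_of_lt i.2 i'.2 h (congrArg Subtype.val heq)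
  · exact hne_of_lt i'.2 i.2 h (congrArg Subtype.val heq).symm

theorem stabilizer_repetitions_at_most_delta_general
    (r : ℕ) (n : Fin r → ℕ) (hn : ∀ i, 1 < n i)
    (L : List ((i : Fin r) → ZMod (n i)))
    (hchain : ∀ i < L.length,
      (L.take i).prod ∣ (L.take (i + 1)).prod
        ∧ ¬ (L.take (i + 1)).prod ∣ (L.take i).prod) :
    {i : ℕ | i < L.length ∧
        {u : ((j : Fin r) → ZMod (n j))ˣ |
            (u : (j : Fin r) → ZMod (n j)) * (L.take i).prod = (L.take i).prod}
          = {u : ((j : Fin r) → ZMod (n j))ˣ |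
            (u : (j : Fin r) → ZMod (n j)) * (L.take (i + 1)).prod
              = (L.take (i + 1)).prod}}.ncard
      ≤ (Finset.univ.filter fun j : Fin r => 2 ∣ n j).card := by
  have (j : Fin r) : NeZero (n j) := ⟨(zero_lt_one.trans (hn j)).ne'⟩
  refine ncard_le_card_of_even_odd_succ (fun k j => addOrderOf ((L.take k).prod j))
    (fun j k k' hk => addOrderOf_dvd_addOrderOf_of_dvd
      (map_dvd (Pi.evalMonoidHom _ j) (L.prod_take_dvd_prod_take hk))) _ _ ?_
  rintro i ⟨hi, hstab⟩
  obtain ⟨j, hj⟩ := Pi.exists_not_dvd_apply_of_not_dvd (hchain i hi).2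
  have hstab' := Pi.stabilizer_units_apply_eq (SetLike.coe_injective hstab) j
  obtain ⟨heven, hodd⟩ := ZMod.even_addOrderOf_and_odd_of_stabilizer_eq
    (map_dvd (Pi.evalMonoidHom _ j) (hchain i hi).1) hj hstab'
  refine ⟨j, ?_, heven, hodd⟩
  simpa using heven.two_dvd.trans (ZMod.addOrderOf_dvd_modulus _)

theorem stabilizer_repetitions_at_most_delta
    (r : ℕ) (hr : 1 ≤ r) (n : Fin r → ℕ) (hn : ∀ i, 1 < n i)
    (L : List ((i : Fin r) → ZMod (n i)))
    (hchain : ∀ i < L.length,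
      (L.take i).prod ∣ (L.take (i + 1)).prod
        ∧ ¬ (L.take (i + 1)).prod ∣ (L.take i).prod) :
    {i : ℕ | i < L.length ∧
        {u : ((j : Fin r) → ZMod (n j))ˣ |
            (u : (j : Fin r) → ZMod (n j)) * (L.take i).prod = (L.take i).prod}
          = {u : ((j : Fin r) → ZMod (n j))ˣ |
            (u : (j : Fin r) → ZMod (n j)) * (L.take (i + 1)).prod
              = (L.take (i + 1)).prod}}.ncard
      ≤ (Finset.univ.filter fun j : Fin r => 2 ∣ n j).card :=
  stabilizer_repetitions_at_most_delta_general r n hn L hchain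
end
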